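/- arXiv:1805.02115 — 8 statements merged into one kernel-verified Lean document; each statement's English description precedes it below -/
import Mathlib

section
/- Let 1 ≤ p < ∞, let X₁, …, Xₙ, Y be real Banach spaces, let T : X₁ × ⋯ × Xₙ → Y be a continuous n-linear operator, and let c ≥ 0. Then T is Lipschitz p-summing with constant c if and only if there exists a Borel probability measure μ on the closed unit ball B of the space of continuous n-linear forms on X₁ × ⋯ × Xₙ, equipped with the topology of pointwise convergence (the weak-* topology), such that for all u, v ∈ X₁ × ⋯ × Xₙ one has ‖T(u) − T(v)‖ ≤ c · ( ∫_B |φ(u) − φ(v)|^p dμ(φ) )^{1/p}. -/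
open scoped BigOperators
open MeasureTheory

/-- `T` is Lipschitz `p`-summing with constant `c`. -/
def LipschitzPSumming {n : ℕ} {X : Fin n → Type*} [∀ i, NormedAddCommGroup (X i)]
    [∀ i, NormedSpace ℝ (X i)] {Y : Type*} [NormedAddCommGroup Y] [NormedSpace ℝ Y]
    (p c : ℝ) (T : ContinuousMultilinearMap ℝ X Y) : Prop :=
  ∀ (k : ℕ) (u v : Fin k → ((i : Fin n) → X i)),
    (∑ i, ‖T (u i) - T (v i)‖ ^ p) ^ (1 / p) ≤
      c * ⨆ φ : {φ : ContinuousMultilinearMap ℝ X ℝ // ‖φ‖ ≤ 1},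
        (∑ i, |φ.1 (u i) - φ.1 (v i)| ^ p) ^ (1 / p)

/-- The closed unit ball of continuous `n`-linear forms on `X₁ × ⋯ × Xₙ`. -/
def FormBall {n : ℕ} (X : Fin n → Type*) [∀ i, NormedAddCommGroup (X i)]
    [∀ i, NormedSpace ℝ (X i)] : Type _ :=
  {φ : ContinuousMultilinearMap ℝ X ℝ // ‖φ‖ ≤ 1}

/-- The topology of pointwise convergence (weak-* topology) on the unit ball of
continuous `n`-linear forms. -/
instance FormBall.topologicalSpace {n : ℕ} (X : Fin n → Type*)
    [∀ i, NormedAddCommGroup (X i)] [∀ i, NormedSpace ℝ (X i)] :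
    TopologicalSpace (FormBall X) :=
  TopologicalSpace.induced
    (fun (φ : FormBall X) (x : (i : Fin n) → X i) => φ.1 x) Pi.topologicalSpace

/-- The Borel σ-algebra of the topology of pointwise convergence. -/
instance FormBall.measurableSpace {n : ℕ} (X : Fin n → Type*)
    [∀ i, NormedAddCommGroup (X i)] [∀ i, NormedSpace ℝ (X i)] :
    MeasurableSpace (FormBall X) :=
  borel (FormBall X)

/-!
Pietsch domination via a Ky Fan type separation argument. The unit ball `B` of `n`-linear
forms is compact (Tychonoff), and the Lipschitz `p`-summing inequality says precisely that every
finite sum of the functions `φ ↦ ‖T u - T v‖ ^ p - c ^ p * |φ u - φ v| ^ p` on `B` takes a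
nonpositive value. By multilinearity of `T` these sums form a convex set, so Hahn–Banach separates
it from the open cone of strictly positive functions in `C(B, ℝ)` by a positive functional, which
the Riesz–Markov–Kakutani theorem turns into the probability measure `μ`. Conversely, a function
whose integral against a probability measure is nonpositive is nonpositive somewhere.
-/

open MeasureTheory Filter Topology Set CompactlySupported

section Separation

variable {K : Type*} [TopologicalSpace K]

theorem ContinuousMap.convex_setOf_forall_pos : Convex ℝ {g : C(K, ℝ) | ∀ x, 0 < g x} := by
  simp only [Set.ofPred_forall]
  exact convex_iInter fun x => convex_halfSpace_gt (ContinuousMap.evalCLM ℝ x).isLinear 0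

theorem ContinuousMap.isOpen_setOf_forall_pos [CompactSpace K] :
    IsOpen {g : C(K, ℝ) | ∀ x, 0 < g x} := by
  simpa [Set.MapsTo] using ContinuousMap.isOpen_setOfPred_mapsTo isCompact_univ isOpen_Ioi

theorem ContinuousMap.exists_positive_functional_separating [CompactSpace K]
    {Q : Set C(K, ℝ)} (hQ : Convex ℝ Q) (hQ_min : ∀ f ∈ Q, ∃ x, f x ≤ 0) :
    ∃ Λ : C(K, ℝ) →ₗ[ℝ] ℝ, Monotone Λ ∧ ∃ s ≤ 0, s < Λ 1 ∧ ∀ f ∈ Q, Λ f ≤ s := by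
  have hPQ : Disjoint {g : C(K, ℝ) | ∀ x, 0 < g x} Q := by
    refine Set.disjoint_left.mpr fun g hg hgQ => ?_
    obtain ⟨x, hx⟩ := hQ_min g hgQ
    exact (hg x).not_ge hx
  obtain ⟨L, s, hP, hQs⟩ :=
    geometric_hahn_banach_open convex_setOf_forall_pos isOpen_setOf_forall_pos hQ hPQ
  -- The strictly positive functions form a cone: letting `t → 0` in `t • 1` and `t → ∞` in
  -- `t • f + 1` gives the signs of `s` and of `L` on nonnegative functions.
  have hs : 0 ≤ s := by
    have hlim : Tendsto (fun t : ℝ => L (t • 1)) (𝓝[>] 0) (𝓝 0) :=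
      ((L.continuous.comp (continuous_id.smul continuous_const)).tendsto' 0 0
        (by simp)).mono_left nhdsWithin_le_nhds
    refine le_of_tendsto hlim (eventually_nhdsWithin_of_forall fun t (ht : 0 < t) => ?_)
    exact (hP _ fun x => by simpa using ht).le
  have hL_nonpos : ∀ f : C(K, ℝ), 0 ≤ f → L f ≤ 0 := by
    intro f hf
    refine ge_of_tendsto (tendsto_const_nhds.div_atTop tendsto_id : Tendsto
      (fun t : ℝ => (s - L 1) / t) atTop (𝓝 0)) ((eventually_gt_atTop 0).mono fun t ht => ?_)
    have hpos := hP (t • f + 1) fun x => by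
      simp only [ContinuousMap.add_apply, ContinuousMap.smul_apply, smul_eq_mul,
        ContinuousMap.one_apply]
      nlinarith [mul_nonneg ht.le (show (0 : ℝ) ≤ f x from hf x)]
    rw [map_add, map_smul, smul_eq_mul] at hpos
    rw [le_div_iff₀ ht]
    linarith
  refine ⟨-(L : C(K, ℝ) →ₗ[ℝ] ℝ), fun f g hfg => ?_, -s, by linarith, ?_, fun f hf => ?_⟩
  · have := hL_nonpos (g - f) (sub_nonneg.mpr hfg)
    simp only [map_sub, LinearMap.neg_apply, ContinuousLinearMap.coe_coe] at this ⊢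
    linarith
  · simpa using hP 1 fun _ => one_pos
  · simpa using hQs f hf

variable [CompactSpace K] [T2Space K] [MeasurableSpace K] [BorelSpace K]

theorem ContinuousMap.exists_isFiniteMeasure_integral_eq (Λ : C(K, ℝ) →ₗ[ℝ] ℝ)
    (hΛ : Monotone Λ) :
    ∃ ν : Measure K, IsFiniteMeasure ν ∧ ∀ f : C(K, ℝ), ∫ x, f x ∂ν = Λ f := by
  let Λc : C_c(K, ℝ) →ₚ[ℝ] ℝ :=
    { toFun g := Λ g.toContinuousMap
      map_add' g g' := Λ.map_add _ _
      map_smul' c g := Λ.map_smul c _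
      monotone' g g' h := hΛ h }
  exact ⟨RealRMK.rieszMeasure Λc, inferInstance, fun f =>
    RealRMK.integral_rieszMeasure Λc (CompactlySupportedContinuousMap.continuousMapEquiv f)⟩

theorem ContinuousMap.exists_isProbabilityMeasure_forall_integral_nonpos [Nonempty K]
    {Q : Set C(K, ℝ)} (hQ : Convex ℝ Q) (hQ_min : ∀ f ∈ Q, ∃ x, f x ≤ 0) :
    ∃ μ : Measure K, IsProbabilityMeasure μ ∧ ∀ f ∈ Q, ∫ x, f x ∂μ ≤ 0 := by
  obtain ⟨Λ, hΛ, s, hs, hs_one, hQs⟩ := exists_positive_functional_separating hQ hQ_min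
  obtain ⟨ν, hν, hνΛ⟩ := exists_isFiniteMeasure_integral_eq Λ hΛ
  rcases eq_zero_or_neZero ν with rfl | hν0
  · refine ⟨Measure.dirac (Classical.arbitrary K), inferInstance, fun f hf => ?_⟩
    have h1 := hνΛ 1
    have hf' := hνΛ f
    rw [integral_zero_measure] at h1 hf'
    linarith [hQs f hf]
  · refine ⟨(ν univ)⁻¹ • ν, inferInstance, fun f hf => ?_⟩
    rw [← average_eq', average_eq, hνΛ, smul_eq_mul]
    exact mul_nonpos_of_nonneg_of_nonpos (by positivity) ((hQs f hf).trans hs)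

end Separation

namespace FormBall

variable {n : ℕ} {X : Fin n → Type*} [∀ i, NormedAddCommGroup (X i)] [∀ i, NormedSpace ℝ (X i)]

instance : BorelSpace (FormBall X) := ⟨rfl⟩

instance : Nonempty (FormBall X) := ⟨⟨0, by simp⟩⟩

def eval (φ : FormBall X) (x : (i : Fin n) → X i) : ℝ := φ.1 x

theorem isEmbedding_eval : Topology.IsEmbedding (eval (X := X)) :=
  ⟨⟨rfl⟩, fun _ _ h => Subtype.ext (ContinuousMultilinearMap.ext (congrFun h))⟩

instance : T2Space (FormBall X) := isEmbedding_eval.t2Space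

theorem continuous_apply (x : (i : Fin n) → X i) : Continuous fun φ : FormBall X => φ.1 x :=
  (_root_.continuous_apply x).comp continuous_induced_dom

theorem continuous_abs_apply_sub_rpow {p : ℝ} (hp : 0 ≤ p) (u v : (i : Fin n) → X i) :
    Continuous fun φ : FormBall X => |φ.1 u - φ.1 v| ^ p :=
  ((continuous_apply u).sub (continuous_apply v)).abs.rpow_const fun _ => Or.inr hp

theorem abs_apply_le (φ : FormBall X) (x : (i : Fin n) → X i) : |φ.1 x| ≤ ∏ i, ‖x i‖ :=
  calc |φ.1 x| ≤ ‖φ.1‖ * ∏ i, ‖x i‖ := φ.1.le_opNorm x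
    _ ≤ ∏ i, ‖x i‖ := mul_le_of_le_one_left (by positivity) φ.2

theorem range_eval : range (eval (X := X)) =
    {F | (∀ x i (y z : X i), F (Function.update x i (y + z)) =
          F (Function.update x i y) + F (Function.update x i z)) ∧
      (∀ x i (a : ℝ) (y : X i),
          F (Function.update x i (a • y)) = a * F (Function.update x i y)) ∧
      ∀ x, |F x| ≤ ∏ i, ‖x i‖} := by
  classical
  ext F
  constructor
  · rintro ⟨φ, rfl⟩
    exact ⟨φ.1.map_update_add, φ.1.map_update_smul, abs_apply_le φ⟩
  · rintro ⟨hadd, hsmul, hbound⟩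
    let f : MultilinearMap ℝ X ℝ :=
      { toFun := F
        map_update_add' := fun x i y z => by convert hadd x i y z
        map_update_smul' := fun x i a y => by rw [smul_eq_mul]; convert hsmul x i a y }
    exact ⟨⟨f.mkContinuous 1 fun x => by rw [one_mul]; exact hbound x,
      f.mkContinuous_norm_le zero_le_one _⟩, rfl⟩

theorem isClosed_range_eval : IsClosed (range (eval (X := X))) := by
  simp only [range_eval, Set.ofPred_and, Set.ofPred_forall]
  refine .inter (isClosed_iInter fun x => isClosed_iInter fun i => isClosed_iInter fun y =>
    isClosed_iInter fun z => isClosed_eq (by fun_prop) (by fun_prop)) (.inter ?_ ?_)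
  · exact isClosed_iInter fun x => isClosed_iInter fun i => isClosed_iInter fun a =>
      isClosed_iInter fun y => isClosed_eq (by fun_prop) (by fun_prop)
  · exact isClosed_iInter fun x => isClosed_le (by fun_prop) continuous_const

instance : CompactSpace (FormBall X) := by
  rw [← isCompact_univ_iff, isEmbedding_eval.isCompact_iff, image_univ]
  refine (isCompact_univ_pi fun x : (i : Fin n) → X i => isCompact_Icc (a := -∏ i, ‖x i‖)
    (b := ∏ i, ‖x i‖)).of_isClosed_subset isClosed_range_eval ?_
  rintro F ⟨φ, rfl⟩ x -
  exact abs_le.mp (abs_apply_le φ x)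

end FormBall

theorem le_mul_rpow_one_div_iff {a b c p : ℝ} (ha : 0 ≤ a) (hb : 0 ≤ b) (hc : 0 ≤ c)
    (hp : 0 < p) : a ≤ c * b ^ (1 / p) ↔ a ^ p ≤ c ^ p * b := by
  have hcb : c * b ^ (1 / p) = (c ^ p * b) ^ p⁻¹ := by
    rw [Real.mul_rpow (by positivity) hb, Real.rpow_rpow_inv hc hp.ne', one_div]
  rw [hcb, Real.le_rpow_inv_iff_of_pos ha (by positivity) hp]

theorem norm_smul_rpow_of_nonneg {E : Type*} [SeminormedAddCommGroup E] [NormedSpace ℝ E]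
    {s : ℝ} (hs : 0 ≤ s) (p : ℝ) (a : E) : ‖s • a‖ ^ p = s ^ p * ‖a‖ ^ p := by
  rw [norm_smul, Real.norm_of_nonneg hs, Real.mul_rpow hs (norm_nonneg a)]

section Pietsch

variable {n : ℕ} {X : Fin n → Type*} [∀ i, NormedAddCommGroup (X i)] [∀ i, NormedSpace ℝ (X i)]
  {Y : Type*} [NormedAddCommGroup Y] [NormedSpace ℝ Y]
  (T : ContinuousMultilinearMap ℝ X Y) (p c : ℝ)

noncomputable def pietschDefect (u v : (i : Fin n) → X i) (φ : FormBall X) : ℝ :=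
  ‖T u - T v‖ ^ p - c ^ p * |φ.1 u - φ.1 v| ^ p

theorem continuous_pietschDefect (hp : 0 ≤ p) (u v : (i : Fin n) → X i) :
    Continuous (pietschDefect T p c u v) :=
  continuous_const.sub (continuous_const.mul (FormBall.continuous_abs_apply_sub_rpow hp u v))

theorem exists_smul_pietschDefect_eq (hp : 0 < p) {t : ℝ} (ht : 0 ≤ t)
    (u v : (i : Fin n) → X i) :
    ∃ u' v', t • pietschDefect T p c u v = pietschDefect T p c u' v' := by
  rcases isEmpty_or_nonempty (Fin n) with hn | ⟨⟨i⟩⟩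
  · refine ⟨u, u, ?_⟩
    rw [Subsingleton.elim v u]
    ext φ
    simp [pietschDefect, Real.zero_rpow hp.ne']
  · classical
    obtain ⟨s, hs, rfl⟩ : ∃ s, 0 ≤ s ∧ s ^ p = t :=
      ⟨t ^ p⁻¹, by positivity, Real.rpow_inv_rpow ht hp.ne'⟩
    have hT (w : (i : Fin n) → X i) : T (Function.update w i (s • w i)) = s • T w := by
      rw [T.map_update_smul, Function.update_eq_self]
    have hφ (φ : FormBall X) (w : (i : Fin n) → X i) :
        φ.1 (Function.update w i (s • w i)) = s • φ.1 w := by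
      rw [φ.1.map_update_smul, Function.update_eq_self]
    refine ⟨Function.update u i (s • u i), Function.update v i (s • v i), funext fun φ => ?_⟩
    simp only [pietschDefect, Pi.smul_apply, hT, hφ, ← smul_sub, ← Real.norm_eq_abs]
    rw [norm_smul_rpow_of_nonneg hs, norm_smul_rpow_of_nonneg hs, smul_eq_mul]
    ring

def pietschSet : Set C(FormBall X, ℝ) :=
  {f | ∃ (k : ℕ) (u v : Fin k → (i : Fin n) → X i),
    ⇑f = ∑ i, pietschDefect T p c (u i) (v i)}

theorem convex_pietschSet (hp : 0 < p) : Convex ℝ (pietschSet T p c) := by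
  rintro f ⟨k, u, v, hf⟩ g ⟨l, u', v', hg⟩ a b ha hb -
  choose U V hUV using fun i => exists_smul_pietschDefect_eq T p c hp ha (u i) (v i)
  choose U' V' hUV' using fun i => exists_smul_pietschDefect_eq T p c hp hb (u' i) (v' i)
  refine ⟨k + l, Fin.append U U', Fin.append V V', ?_⟩
  simp only [Fin.sum_univ_add, Fin.append_left, Fin.append_right, ← hUV, ← hUV',
    ← Finset.smul_sum, ← hf, ← hg, ContinuousMap.coe_add, ContinuousMap.coe_smul]

theorem lipschitzPSumming_iff_forall_exists_sum_pietschDefect_nonpos (hp : 0 < p)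
    (hc : 0 ≤ c) : LipschitzPSumming p c T ↔ ∀ (k : ℕ) (u v : Fin k → (i : Fin n) → X i),
      ∃ φ : FormBall X, ∑ i, pietschDefect T p c (u i) (v i) φ ≤ 0 := by
  refine forall_congr' fun k => forall₂_congr fun u v => ?_
  set h : FormBall X → ℝ := fun φ => ∑ i, |φ.1 (u i) - φ.1 (v i)| ^ p
  have h_nonneg (φ : FormBall X) : 0 ≤ h φ := Finset.sum_nonneg fun i _ => by positivity
  have h_cont : Continuous h := continuous_finsetSum _ fun i _ =>
    FormBall.continuous_abs_apply_sub_rpow hp.le (u i) (v i)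
  obtain ⟨φmax, -, hmax⟩ := isCompact_univ.exists_isMaxOn univ_nonempty h_cont.continuousOn
  have hle (φ : FormBall X) : h φ ^ (1 / p) ≤ h φmax ^ (1 / p) :=
    Real.rpow_le_rpow (h_nonneg φ) (hmax (mem_univ φ)) (by positivity)
  have hsup : ⨆ φ : {φ : ContinuousMultilinearMap ℝ X ℝ // ‖φ‖ ≤ 1},
      (∑ i, |φ.1 (u i) - φ.1 (v i)| ^ p) ^ (1 / p) = h φmax ^ (1 / p) :=
    le_antisymm (ciSup_le (ι := FormBall X) hle)
      (le_ciSup (f := fun φ : FormBall X => h φ ^ (1 / p)) ⟨_, forall_mem_range.mpr hle⟩ φmax)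
  have hA : 0 ≤ ∑ i, ‖T (u i) - T (v i)‖ ^ p := Finset.sum_nonneg fun i _ => by positivity
  simp only [pietschDefect, Finset.sum_sub_distrib, ← Finset.mul_sum, sub_nonpos]
  rw [hsup, le_mul_rpow_one_div_iff (by positivity) (h_nonneg _) hc hp, one_div,
    Real.rpow_inv_rpow hA hp.ne']
  exact ⟨fun hφ => ⟨φmax, hφ⟩, fun ⟨φ, hφ⟩ =>
    hφ.trans (mul_le_mul_of_nonneg_left (hmax (mem_univ φ)) (by positivity))⟩

theorem norm_sub_le_iff_integral_pietschDefect_nonpos (hp : 0 < p) (hc : 0 ≤ c)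
    (μ : Measure (FormBall X)) [IsProbabilityMeasure μ] (u v : (i : Fin n) → X i) :
    ‖T u - T v‖ ≤ c * (∫ φ, |φ.1 u - φ.1 v| ^ p ∂μ) ^ (1 / p) ↔
      ∫ φ, pietschDefect T p c u v φ ∂μ ≤ 0 := by
  have hint : Integrable (fun φ : FormBall X => |φ.1 u - φ.1 v| ^ p) μ :=
    (FormBall.continuous_abs_apply_sub_rpow hp.le u v).integrable_of_hasCompactSupport
      (HasCompactSupport.of_compactSpace _)
  simp only [pietschDefect]
  rw [integral_sub (integrable_const _) (hint.const_mul _), integral_const,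
    integral_const_mul, probReal_univ, one_smul, sub_nonpos,
    le_mul_rpow_one_div_iff (norm_nonneg _) (integral_nonneg fun φ => by positivity) hc hp]

end Pietsch

theorem lipschitzPSumming_iff_domination_general {n : ℕ} {X : Fin n → Type*}
    [∀ i, NormedAddCommGroup (X i)] [∀ i, NormedSpace ℝ (X i)]
    {Y : Type*} [NormedAddCommGroup Y] [NormedSpace ℝ Y]
    (p : ℝ) (hp : 1 ≤ p) (c : ℝ) (hc : 0 ≤ c) (T : ContinuousMultilinearMap ℝ X Y) :
    LipschitzPSumming p c T ↔
      ∃ μ : Measure (FormBall X), IsProbabilityMeasure μ ∧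
        ∀ u v : (i : Fin n) → X i,
          ‖T u - T v‖ ≤ c * (∫ φ : FormBall X, |φ.1 u - φ.1 v| ^ p ∂μ) ^ (1 / p) := by
  have hp₀ : 0 < p := by linarith
  rw [lipschitzPSumming_iff_forall_exists_sum_pietschDefect_nonpos T p c hp₀ hc]
  constructor
  · intro hT
    obtain ⟨μ, hμ, hμQ⟩ := ContinuousMap.exists_isProbabilityMeasure_forall_integral_nonpos
      (convex_pietschSet T p c hp₀) fun f ⟨k, u, v, hf⟩ => by simpa [hf] using hT k u v
    refine ⟨μ, hμ, fun u v => ?_⟩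
    rw [norm_sub_le_iff_integral_pietschDefect_nonpos T p c hp₀ hc]
    exact hμQ ⟨_, continuous_pietschDefect T p c hp₀.le u v⟩
      ⟨1, fun _ => u, fun _ => v, by simp⟩
  · rintro ⟨μ, hμ, hdom⟩ k u v
    have hint (i : Fin k) : Integrable (pietschDefect T p c (u i) (v i)) μ :=
      (continuous_pietschDefect T p c hp₀.le _ _).integrable_of_hasCompactSupport
        (HasCompactSupport.of_compactSpace _)
    obtain ⟨φ, hφ⟩ := exists_le_integral (integrable_finsetSum _ fun i _ => hint i)
    refine ⟨φ, hφ.trans ?_⟩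
    rw [integral_finsetSum _ fun i _ => hint i]
    exact Finset.sum_nonpos fun i _ =>
      (norm_sub_le_iff_integral_pietschDefect_nonpos T p c hp₀ hc μ _ _).mp (hdom _ _)

/-- Pietsch domination theorem: `T` is Lipschitz `p`-summing with constant `c` iff
there is a Borel probability measure `μ` on the weak-* unit ball of `n`-linear forms
such that `‖T u − T v‖ ≤ c·(∫ |φ(u) − φ(v)|^p dμ(φ))^{1/p}` for all `u, v`. -/
theorem lipschitzPSumming_iff_domination {n : ℕ} {X : Fin n → Type*}
    [∀ i, NormedAddCommGroup (X i)] [∀ i, NormedSpace ℝ (X i)] [∀ i, CompleteSpace (X i)]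
    {Y : Type*} [NormedAddCommGroup Y] [NormedSpace ℝ Y] [CompleteSpace Y]
    (p : ℝ) (hp : 1 ≤ p) (c : ℝ) (hc : 0 ≤ c) (T : ContinuousMultilinearMap ℝ X Y) :
    LipschitzPSumming p c T ↔
      ∃ μ : Measure (FormBall X), IsProbabilityMeasure μ ∧
        ∀ u v : (i : Fin n) → X i,
          ‖T u - T v‖ ≤ c * (∫ φ : FormBall X, |φ.1 u - φ.1 v| ^ p ∂μ) ^ (1 / p) :=
  lipschitzPSumming_iff_domination_general p hp c hc T
end

section
/- Let 1 ≤ p < ∞ and let X₁, …, Xₙ, Y be real Banach spaces. Every continuous n-linear operator T : X₁ × ⋯ × Xₙ → Y whose range is contained in a finite-dimensional linear subspace of Y is Lipschitz p-summing. -/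
/-! A continuous multilinear map with range in a finite-dimensional subspace is a finite sum of
rank-one maps `x ↦ ψ x • y`, the forms `ψ` being the coordinates in a basis of that subspace.
The supremum in `LipschitzPSumming` is the operator norm of the linear map `incrementsL ℝ ℝ`
sending a form `φ` to its increments `(φ (u k) - φ (v k))ₖ` in `ℓᵖ`. Hence the rank-one map
`x ↦ ψ x • y` is Lipschitz `p`-summing with constant `‖ψ‖ * ‖y‖`, and the triangle inequality
in `ℓᵖ` (Minkowski's inequality) shows that constants add up along sums of maps. -/

open scoped BigOperators

theorem PiLp.norm_toLp_smul_const {κ 𝕜 G : Type*} [Fintype κ] [NormedField 𝕜]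
    [SeminormedAddCommGroup G] [NormedSpace 𝕜 G] {q : ENNReal} [Fact (1 ≤ q)]
    (hq : q ≠ ⊤) (a : PiLp q (fun _ : κ => 𝕜)) (y : G) :
    ‖WithLp.toLp q (fun k => a k • y)‖ = ‖a‖ * ‖y‖ := by
  have hq0 : 0 < q.toReal := ENNReal.toReal_pos (by have := (Fact.out : 1 ≤ q); positivity) hq
  simp only [PiLp.norm_eq_sum hq0, norm_smul, Real.mul_rpow (norm_nonneg _) (norm_nonneg _),
    ← Finset.sum_mul]
  rw [Real.mul_rpow (by positivity) (by positivity), ← Real.rpow_mul (norm_nonneg _),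
    mul_one_div_cancel hq0.ne', Real.rpow_one]

theorem ContinuousLinearMap.iSup_norm_apply_eq_norm {E F : Type*} [NormedAddCommGroup E]
    [NormedSpace ℝ E] [SeminormedAddCommGroup F] [NormedSpace ℝ F] (f : E →L[ℝ] F) :
    ⨆ x : {x : E // ‖x‖ ≤ 1}, ‖f x‖ = ‖f‖ := by
  rw [← f.sSup_unitClosedBall_eq_norm, sSup_image']
  exact (Equiv.subtypeEquivRight fun _ => mem_closedBall_zero_iff.symm).iSup_congr fun _ => rfl

namespace ContinuousMultilinearMap

variable {𝕜 ι κ G : Type*} [NontriviallyNormedField 𝕜]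
  {X : ι → Type*} [∀ i, NormedAddCommGroup (X i)] [∀ i, NormedSpace 𝕜 (X i)]
  [NormedAddCommGroup G] [NormedSpace 𝕜 G]

theorem exists_eq_sum_smulRight [CompleteSpace 𝕜] (T : ContinuousMultilinearMap 𝕜 X G)
    (F : Submodule 𝕜 G) [FiniteDimensional 𝕜 F] (hT : ∀ x, T x ∈ F) :
    ∃ (m : ℕ) (ψ : Fin m → ContinuousMultilinearMap 𝕜 X 𝕜) (y : Fin m → G),
      T = ∑ j, (ψ j).smulRight (y j) := by
  let b := Module.finBasis 𝕜 F
  refine ⟨_, fun j => (LinearMap.toContinuousLinearMap (b.coord j)).compContinuousMultilinearMap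
    (T.codRestrict F hT), fun j => b j, ?_⟩
  ext x
  have h := congrArg Subtype.val (b.sum_repr (T.codRestrict F hT x))
  simp only [Submodule.coe_sum, Submodule.coe_smul] at h
  simpa using h.symm

variable [Fintype ι] [Fintype κ]

variable (𝕜 G) in
def incrementsL (q : ENNReal) [Fact (1 ≤ q)] (u v : κ → ∀ i, X i) :
    ContinuousMultilinearMap 𝕜 X G →L[𝕜] PiLp q (fun _ : κ => G) :=
  (PiLp.continuousLinearEquiv q 𝕜 (fun _ : κ => G)).symm.toContinuousLinearMap.comp
    (ContinuousLinearMap.pi fun k => apply 𝕜 X G (u k) - apply 𝕜 X G (v k))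

end ContinuousMultilinearMap

open ContinuousMultilinearMap

section LipschitzPSumming

variable {n : ℕ} {X : Fin n → Type*} [∀ i, NormedAddCommGroup (X i)] [∀ i, NormedSpace ℝ (X i)]
  {Y : Type*} [NormedAddCommGroup Y] [NormedSpace ℝ Y] {p : ℝ} [hp : Fact (1 ≤ p)]

instance fact_one_le_ofReal : Fact (1 ≤ ENNReal.ofReal p) :=
  ⟨ENNReal.one_le_ofReal.2 hp.out⟩

theorem norm_incrementsL_ofReal {κ : Type*} [Fintype κ] (u v : κ → ∀ i, X i)
    (f : ContinuousMultilinearMap ℝ X Y) :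
    ‖incrementsL ℝ Y (ENNReal.ofReal p) u v f‖ = (∑ k, ‖f (u k) - f (v k)‖ ^ p) ^ (1 / p) := by
  have hp0 : 0 < p := zero_lt_one.trans_le hp.out
  have hp' : (ENNReal.ofReal p).toReal = p := ENNReal.toReal_ofReal hp0.le
  rw [PiLp.norm_eq_sum (by rwa [hp']), hp']
  rfl

theorem lipschitzPSumming_iff_norm_incrementsL_le {c : ℝ} {T : ContinuousMultilinearMap ℝ X Y} :
    LipschitzPSumming p c T ↔ ∀ (k : ℕ) (u v : Fin k → ∀ i, X i),
      ‖incrementsL ℝ Y (ENNReal.ofReal p) u v T‖ ≤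
        c * ‖incrementsL ℝ ℝ (ENNReal.ofReal p) u v‖ := by
  refine forall₃_congr fun k u v => ?_
  simp only [← ContinuousLinearMap.iSup_norm_apply_eq_norm, norm_incrementsL_ofReal,
    Real.norm_eq_abs]

theorem LipschitzPSumming.sum {J : Type*} (s : Finset J) {c : J → ℝ}
    {T : J → ContinuousMultilinearMap ℝ X Y} (h : ∀ j ∈ s, LipschitzPSumming p (c j) (T j)) :
    LipschitzPSumming p (∑ j ∈ s, c j) (∑ j ∈ s, T j) := by
  rw [lipschitzPSumming_iff_norm_incrementsL_le]
  intro k u v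
  rw [_root_.map_sum, Finset.sum_mul]
  exact (norm_sum_le _ _).trans <| Finset.sum_le_sum fun j hj =>
    lipschitzPSumming_iff_norm_incrementsL_le.1 (h j hj) k u v

theorem lipschitzPSumming_smulRight (φ : ContinuousMultilinearMap ℝ X ℝ) (y : Y) :
    LipschitzPSumming p (‖φ‖ * ‖y‖) (φ.smulRight y) := by
  rw [lipschitzPSumming_iff_norm_incrementsL_le]
  intro k u v
  set L := incrementsL ℝ ℝ (ENNReal.ofReal p) u v
  have hL : incrementsL ℝ Y (ENNReal.ofReal p) u v (φ.smulRight y) =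
      WithLp.toLp _ (fun k => L φ k • y) := by
    ext k
    simp [L, incrementsL, sub_smul]
  calc ‖incrementsL ℝ Y (ENNReal.ofReal p) u v (φ.smulRight y)‖ = ‖L φ‖ * ‖y‖ := by
        rw [hL, PiLp.norm_toLp_smul_const ENNReal.ofReal_ne_top]
    _ ≤ ‖L‖ * ‖φ‖ * ‖y‖ := by gcongr; exact L.le_opNorm φ
    _ = ‖φ‖ * ‖y‖ * ‖L‖ := by ring

end LipschitzPSumming

theorem lipschitzPSumming_of_finiteDimensional_range_general {n : ℕ} {X : Fin n → Type*}
    [∀ i, NormedAddCommGroup (X i)] [∀ i, NormedSpace ℝ (X i)]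
    {Y : Type*} [NormedAddCommGroup Y] [NormedSpace ℝ Y]
    (p : ℝ) (hp : 1 ≤ p) (T : ContinuousMultilinearMap ℝ X Y)
    (F : Submodule ℝ Y) (hF : FiniteDimensional ℝ F)
    (hrange : ∀ x : (i : Fin n) → X i, T x ∈ F) :
    ∃ c : ℝ, 0 ≤ c ∧ LipschitzPSumming p c T := by
  have : Fact (1 ≤ p) := ⟨hp⟩
  obtain ⟨m, ψ, y, rfl⟩ := T.exists_eq_sum_smulRight F hrange
  exact ⟨_, Finset.sum_nonneg fun j _ => by positivity,
    LipschitzPSumming.sum _ fun j _ => lipschitzPSumming_smulRight (ψ j) (y j)⟩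

/-- Every continuous multilinear operator whose range lies in a finite-dimensional
subspace of `Y` is Lipschitz `p`-summing. -/
theorem lipschitzPSumming_of_finiteDimensional_range {n : ℕ} {X : Fin n → Type*}
    [∀ i, NormedAddCommGroup (X i)] [∀ i, NormedSpace ℝ (X i)] [∀ i, CompleteSpace (X i)]
    {Y : Type*} [NormedAddCommGroup Y] [NormedSpace ℝ Y] [CompleteSpace Y]
    (p : ℝ) (hp : 1 ≤ p) (T : ContinuousMultilinearMap ℝ X Y)
    (F : Submodule ℝ Y) (hF : FiniteDimensional ℝ F)
    (hrange : ∀ x : (i : Fin n) → X i, T x ∈ F) :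
    ∃ c : ℝ, 0 ≤ c ∧ LipschitzPSumming p c T :=
  lipschitzPSumming_of_finiteDimensional_range_general p hp T F hF hrange
end

section
/- Let 1 ≤ p < ∞, let W₁, …, Wₙ, X₁, …, Xₙ, Y, Z be real Banach spaces, let T : X₁ × ⋯ × Xₙ → Y be a continuous n-linear operator that is Lipschitz p-summing with constant c, let R : Y → Z be a bounded linear operator, and let Sᵢ : Wᵢ → Xᵢ be bounded linear operators for i = 1, …, n. Then the continuous n-linear operator (w₁, …, wₙ) ↦ R(T(S₁w₁, …, Sₙwₙ)) is Lipschitz p-summing with constant ‖R‖ · c · ‖S₁‖ ⋯ ‖Sₙ‖; in particular π_p^{Lip}(R ∘ T ∘ (S₁ × ⋯ × Sₙ)) ≤ ‖R‖ · π_p^{Lip}(T) · ‖S₁‖ ⋯ ‖Sₙ‖. -/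
open scoped BigOperators

/-- The Lipschitz `p`-summing norm `π_p^{Lip}(T)`. -/
noncomputable def lipschitzPSummingNorm {n : ℕ} {X : Fin n → Type*}
    [∀ i, NormedAddCommGroup (X i)] [∀ i, NormedSpace ℝ (X i)]
    {Y : Type*} [NormedAddCommGroup Y] [NormedSpace ℝ Y]
    (p : ℝ) (T : ContinuousMultilinearMap ℝ X Y) : ℝ :=
  sInf {c : ℝ | 0 ≤ c ∧ LipschitzPSumming p c T}

section Aux

variable {n : ℕ} {W : Fin n → Type*} [∀ i, NormedAddCommGroup (W i)] [∀ i, NormedSpace ℝ (W i)]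

/-- The family appearing under the supremum is bounded above. -/
lemma lps_bddAbove (p : ℝ) (hp : 0 < p) {k : ℕ} (u v : Fin k → ((i : Fin n) → W i)) :
    BddAbove (Set.range fun ψ : {ψ : ContinuousMultilinearMap ℝ W ℝ // ‖ψ‖ ≤ 1} =>
      (∑ i, |ψ.1 (u i) - ψ.1 (v i)| ^ p) ^ (1 / p)) := by
  refine ⟨(∑ i, ((∏ j, ‖u i j‖) + (∏ j, ‖v i j‖)) ^ p) ^ (1 / p), ?_⟩
  rintro _ ⟨ψ, rfl⟩
  have h1p : (0:ℝ) ≤ 1 / p := by positivity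
  refine Real.rpow_le_rpow (Finset.sum_nonneg fun i _ => Real.rpow_nonneg (abs_nonneg _) p)
    (Finset.sum_le_sum fun i _ => ?_) h1p
  refine Real.rpow_le_rpow (abs_nonneg _) ?_ hp.le
  have h1 : |ψ.1 (u i)| ≤ ∏ j, ‖u i j‖ := by
    calc |ψ.1 (u i)| ≤ ‖ψ.1‖ * ∏ j, ‖u i j‖ := ψ.1.le_opNorm _
      _ ≤ 1 * ∏ j, ‖u i j‖ :=
          mul_le_mul_of_nonneg_right ψ.2 (Finset.prod_nonneg fun j _ => norm_nonneg _)
      _ = _ := one_mul _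
  have h2 : |ψ.1 (v i)| ≤ ∏ j, ‖v i j‖ := by
    calc |ψ.1 (v i)| ≤ ‖ψ.1‖ * ∏ j, ‖v i j‖ := ψ.1.le_opNorm _
      _ ≤ 1 * ∏ j, ‖v i j‖ :=
          mul_le_mul_of_nonneg_right ψ.2 (Finset.prod_nonneg fun j _ => norm_nonneg _)
      _ = _ := one_mul _
  calc |ψ.1 (u i) - ψ.1 (v i)| ≤ |ψ.1 (u i)| + |ψ.1 (v i)| := abs_sub _ _
    _ ≤ _ := add_le_add h1 h2

end Aux

/-- Ideal property: if `T` is Lipschitz `p`-summing with constant `c`, `R` is a bounded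
linear operator and the `Sᵢ` are bounded linear operators, then `R ∘ T ∘ (S₁ × ⋯ × Sₙ)`
is Lipschitz `p`-summing with constant `‖R‖·c·‖S₁‖⋯‖Sₙ‖`, and
`π_p^{Lip}(R ∘ T ∘ (S₁ × ⋯ × Sₙ)) ≤ ‖R‖·π_p^{Lip}(T)·‖S₁‖⋯‖Sₙ‖`. -/
theorem lipschitzPSumming_ideal {n : ℕ} {W X : Fin n → Type*}
    [∀ i, NormedAddCommGroup (W i)] [∀ i, NormedSpace ℝ (W i)] [∀ i, CompleteSpace (W i)]
    [∀ i, NormedAddCommGroup (X i)] [∀ i, NormedSpace ℝ (X i)] [∀ i, CompleteSpace (X i)]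
    {Y Z : Type*} [NormedAddCommGroup Y] [NormedSpace ℝ Y] [CompleteSpace Y]
    [NormedAddCommGroup Z] [NormedSpace ℝ Z] [CompleteSpace Z]
    (p : ℝ) (hp : 1 ≤ p) (c : ℝ) (hc : 0 ≤ c)
    (T : ContinuousMultilinearMap ℝ X Y) (hT : LipschitzPSumming p c T)
    (R : Y →L[ℝ] Z) (S : (i : Fin n) → W i →L[ℝ] X i) :
    LipschitzPSumming p (‖R‖ * c * ∏ i, ‖S i‖)
        ((R.compContinuousMultilinearMap T).compContinuousLinearMap S) ∧
      lipschitzPSummingNorm p ((R.compContinuousMultilinearMap T).compContinuousLinearMap S) ≤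
        ‖R‖ * lipschitzPSummingNorm p T * ∏ i, ‖S i‖ := by
  classical
  have hp0 : (0:ℝ) < p := lt_of_lt_of_le one_pos hp
  have hp0' : p ≠ 0 := ne_of_gt hp0
  have h1p : (0:ℝ) ≤ 1 / p := by positivity
  set P : ℝ := ∏ i, ‖S i‖ with hPdef
  have hPnn : 0 ≤ P := Finset.prod_nonneg fun i _ => norm_nonneg _
  -- pulling a constant out of the `ℓ^p` expression
  have pull : ∀ (a : ℝ), 0 ≤ a → ∀ (s : ℝ), 0 ≤ s → (a ^ p * s) ^ (1 / p) = a * s ^ (1 / p) := by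
    intro a ha s hs
    rw [Real.mul_rpow (Real.rpow_nonneg ha p) hs, ← Real.rpow_mul ha, mul_one_div,
      div_self hp0', Real.rpow_one]
  have main : ∀ c', 0 ≤ c' → LipschitzPSumming p c' T →
      LipschitzPSumming p (‖R‖ * c' * P)
        ((R.compContinuousMultilinearMap T).compContinuousLinearMap S) := by
    intro c' hc' hT' k u v
    set u' : Fin k → ((i : Fin n) → X i) := fun i j => S j (u i j) with hu'
    set v' : Fin k → ((i : Fin n) → X i) := fun i j => S j (v i j) with hv'
    set supW : ℝ := ⨆ ψ : {ψ : ContinuousMultilinearMap ℝ W ℝ // ‖ψ‖ ≤ 1},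
        (∑ i, |ψ.1 (u i) - ψ.1 (v i)| ^ p) ^ (1 / p) with hsupW
    have hbdd := lps_bddAbove p hp0 u v
    have hsupWnn : 0 ≤ supW :=
      Real.iSup_nonneg fun ψ => Real.rpow_nonneg
        (Finset.sum_nonneg fun i _ => Real.rpow_nonneg (abs_nonneg _) p) _
    -- Step C: the X-supremum (at the points u', v') is at most P * supW
    have hsup : (⨆ φ : {φ : ContinuousMultilinearMap ℝ X ℝ // ‖φ‖ ≤ 1},
        (∑ i, |φ.1 (u' i) - φ.1 (v' i)| ^ p) ^ (1 / p)) ≤ P * supW := by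
      refine Real.iSup_le (fun φ => ?_) (mul_nonneg hPnn hsupWnn)
      by_cases hP0 : P = 0
      · obtain ⟨j, -, hj⟩ := Finset.prod_eq_zero_iff.1 hP0
        have hSj : S j = 0 := by rwa [norm_eq_zero] at hj
        have hz : ∀ m : Fin k, φ.1 (u' m) = 0 ∧ φ.1 (v' m) = 0 := by
          intro m
          constructor <;>
          · refine φ.1.map_coord_zero j ?_
            simp [hu', hv', hSj]
        have : (∑ i, |φ.1 (u' i) - φ.1 (v' i)| ^ p) = 0 := by
          refine Finset.sum_eq_zero fun i _ => ?_
          rw [(hz i).1, (hz i).2, sub_zero, abs_zero, Real.zero_rpow hp0']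
        rw [this, Real.zero_rpow (by positivity)]
        exact mul_nonneg hPnn hsupWnn
      · have hPpos : 0 < P := lt_of_le_of_ne hPnn (Ne.symm hP0)
        set ψ0 : ContinuousMultilinearMap ℝ W ℝ :=
          P⁻¹ • (φ.1.compContinuousLinearMap S) with hψ0
        have hψnorm : ‖ψ0‖ ≤ 1 := by
          rw [hψ0, norm_smul P⁻¹ (φ.1.compContinuousLinearMap S), Real.norm_eq_abs,
            abs_of_nonneg (inv_nonneg.2 hPnn)]
          calc P⁻¹ * ‖φ.1.compContinuousLinearMap S‖ ≤ P⁻¹ * (‖φ.1‖ * P) := by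
                gcongr
                exact φ.1.norm_compContinuousLinearMap_le S
            _ ≤ P⁻¹ * (1 * P) := by gcongr; exact φ.2
            _ = 1 := by field_simp
        have happ : ∀ m : Fin k, φ.1 (u' m) = P * ψ0 (u m) ∧ φ.1 (v' m) = P * ψ0 (v m) := by
          intro m
          constructor <;>
          · rw [hψ0]
            simp only [ContinuousMultilinearMap.smul_apply,
              ContinuousMultilinearMap.compContinuousLinearMap_apply, smul_eq_mul]
            rw [← mul_assoc, mul_inv_cancel₀ hP0, one_mul]
        have hsum : (∑ i, |φ.1 (u' i) - φ.1 (v' i)| ^ p)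
            = P ^ p * ∑ i, |ψ0 (u i) - ψ0 (v i)| ^ p := by
          rw [Finset.mul_sum]
          refine Finset.sum_congr rfl fun i _ => ?_
          rw [(happ i).1, (happ i).2, ← mul_sub, abs_mul, abs_of_nonneg hPnn,
            Real.mul_rpow hPnn (abs_nonneg _)]
        rw [hsum, pull P hPnn _ (Finset.sum_nonneg fun i _ => Real.rpow_nonneg (abs_nonneg _) p)]
        gcongr
        exact le_ciSup hbdd ⟨ψ0, hψnorm⟩
    -- Step A + B : conclude
    have hstepA : (∑ i, ‖((R.compContinuousMultilinearMap T).compContinuousLinearMap S) (u i)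
          - ((R.compContinuousMultilinearMap T).compContinuousLinearMap S) (v i)‖ ^ p) ^ (1 / p)
        ≤ ‖R‖ * (∑ i, ‖T (u' i) - T (v' i)‖ ^ p) ^ (1 / p) := by
      rw [← pull ‖R‖ (norm_nonneg R) _
        (Finset.sum_nonneg fun i _ => Real.rpow_nonneg (norm_nonneg _) p)]
      refine Real.rpow_le_rpow (Finset.sum_nonneg fun i _ =>
        Real.rpow_nonneg (norm_nonneg _) p) ?_ h1p
      rw [Finset.mul_sum]
      refine Finset.sum_le_sum fun i _ => ?_
      rw [← Real.mul_rpow (norm_nonneg R) (norm_nonneg _)]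
      refine Real.rpow_le_rpow (norm_nonneg _) ?_ hp0.le
      have : ((R.compContinuousMultilinearMap T).compContinuousLinearMap S) (u i)
          - ((R.compContinuousMultilinearMap T).compContinuousLinearMap S) (v i)
          = R (T (u' i) - T (v' i)) := by
        simp [hu', hv', map_sub]
      rw [this]
      exact R.le_opNorm _
    have hT'uv := hT' k u' v'
    calc (∑ i, ‖((R.compContinuousMultilinearMap T).compContinuousLinearMap S) (u i)
          - ((R.compContinuousMultilinearMap T).compContinuousLinearMap S) (v i)‖ ^ p) ^ (1 / p)
        ≤ ‖R‖ * (∑ i, ‖T (u' i) - T (v' i)‖ ^ p) ^ (1 / p) := hstepA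
      _ ≤ ‖R‖ * (c' * ⨆ φ : {φ : ContinuousMultilinearMap ℝ X ℝ // ‖φ‖ ≤ 1},
            (∑ i, |φ.1 (u' i) - φ.1 (v' i)| ^ p) ^ (1 / p)) := by gcongr
      _ ≤ ‖R‖ * (c' * (P * supW)) := by gcongr
      _ = ‖R‖ * c' * P * supW := by ring
  refine ⟨main c hc hT, ?_⟩
  -- the norm inequality
  set A : Set ℝ := {c | 0 ≤ c ∧ LipschitzPSumming p c T} with hA
  set B : Set ℝ := {c | 0 ≤ c ∧ LipschitzPSumming p c
    ((R.compContinuousMultilinearMap T).compContinuousLinearMap S)} with hB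
  have hAne : A.Nonempty := ⟨c, hc, hT⟩
  have hBbdd : BddBelow B := ⟨0, fun x hx => hx.1⟩
  have hkey : ∀ c' ∈ A, sInf B ≤ (‖R‖ * P) * c' := by
    intro c' hc'
    have : ‖R‖ * c' * P ∈ B :=
      ⟨mul_nonneg (mul_nonneg (norm_nonneg R) hc'.1) hPnn, main c' hc'.1 hc'.2⟩
    calc sInf B ≤ ‖R‖ * c' * P := csInf_le hBbdd this
      _ = (‖R‖ * P) * c' := by ring
  have hAinf : 0 ≤ sInf A := Real.sInf_nonneg fun x hx => hx.1
  have hgoal : sInf B ≤ (‖R‖ * P) * sInf A := by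
    by_cases hk : ‖R‖ * P = 0
    · rw [hk, zero_mul]
      calc sInf B ≤ (‖R‖ * P) * c := hkey c ⟨hc, hT⟩
        _ = 0 := by rw [hk, zero_mul]
    · have hkpos : 0 < ‖R‖ * P :=
        lt_of_le_of_ne (mul_nonneg (norm_nonneg R) hPnn) (Ne.symm hk)
      rw [mul_comm, ← div_le_iff₀ hkpos]
      exact le_csInf hAne fun c' hc' => (div_le_iff₀ hkpos).2 (by
        rw [mul_comm]; exact hkey c' hc')
  calc lipschitzPSummingNorm p ((R.compContinuousMultilinearMap T).compContinuousLinearMap S)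
      = sInf B := rfl
    _ ≤ (‖R‖ * P) * sInf A := hgoal
    _ = ‖R‖ * lipschitzPSummingNorm p T * ∏ i, ‖S i‖ := by
        rw [lipschitzPSummingNorm, ← hA]; ring
end

section
/- Let 1 ≤ p < ∞, let X₁, …, Xₙ, Y, Z be real Banach spaces, let T : X₁ × ⋯ × Xₙ → Y be a continuous n-linear operator, and let R : Y → Z be a bounded linear operator that is absolutely p-summing with constant C, i.e., for every finite family y₁, …, y_k ∈ Y one has (Σᵢ ‖R(yᵢ)‖^p)^{1/p} ≤ C · sup{ (Σᵢ |y*(yᵢ)|^p)^{1/p} : y* ∈ Y* with ‖y*‖ ≤ 1 }. Then the composition R ∘ T : X₁ × ⋯ × Xₙ → Z is Lipschitz p-summing with constant C · ‖T‖, where ‖T‖ is the norm of T as a continuous n-linear operator. -/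
open scoped BigOperators

/-- A bounded linear operator `R` is absolutely `p`-summing with constant `C`. -/
def AbsolutelyPSumming {Y Z : Type*} [NormedAddCommGroup Y] [NormedSpace ℝ Y]
    [NormedAddCommGroup Z] [NormedSpace ℝ Z] (p C : ℝ) (R : Y →L[ℝ] Z) : Prop :=
  ∀ (k : ℕ) (y : Fin k → Y),
    (∑ i, ‖R (y i)‖ ^ p) ^ (1 / p) ≤
      C * ⨆ f : {f : Y →L[ℝ] ℝ // ‖f‖ ≤ 1},
        (∑ i, |f.1 (y i)| ^ p) ^ (1 / p)

/-!
For a functional `f` in the unit ball of `Y*`, the form `f ∘ T` is a continuous multilinear form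
of norm at most `‖T‖`, so the weak `p`-norm of the differences `T uᵢ - T vᵢ` in `Y` is at most
`‖T‖` times the multilinear weak `p`-norm of the pairs `(uᵢ, vᵢ)`. Applying the `p`-summing
inequality of `R` to `yᵢ = T uᵢ - T vᵢ` gives the claim.
-/

theorem Real.sum_abs_mul_rpow_rpow_one_div {ι : Type*} [Fintype ι] {p : ℝ} (hp : p ≠ 0)
    (c : ℝ) (x : ι → ℝ) :
    (∑ i, |c * x i| ^ p) ^ (1 / p) = |c| * (∑ i, |x i| ^ p) ^ (1 / p) := by
  simp_rw [abs_mul, Real.mul_rpow (abs_nonneg c) (abs_nonneg _), ← Finset.mul_sum]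
  rw [Real.mul_rpow (by positivity) (by positivity), one_div,
    Real.rpow_rpow_inv (abs_nonneg c) hp]

namespace ContinuousMultilinearMap

variable {ι : Type*} [Fintype ι] {n : ℕ} {X : Fin n → Type*}
  [∀ j, NormedAddCommGroup (X j)] [∀ j, NormedSpace ℝ (X j)] {p : ℝ}

theorem bddAbove_range_sum_abs_sub_rpow (hp : 0 ≤ p) (u v : ι → (∀ j, X j)) :
    BddAbove (Set.range fun φ : {φ : ContinuousMultilinearMap ℝ X ℝ // ‖φ‖ ≤ 1} =>
      (∑ i, |φ.1 (u i) - φ.1 (v i)| ^ p) ^ (1 / p)) := by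
  refine ⟨(∑ i, (∏ j, ‖u i j‖ + ∏ j, ‖v i j‖) ^ p) ^ (1 / p), ?_⟩
  rintro _ ⟨⟨φ, hφ⟩, rfl⟩
  have unit_bound (x : ∀ j, X j) : |φ x| ≤ ∏ j, ‖x j‖ :=
    (φ.le_opNorm x).trans (mul_le_of_le_one_left (by positivity) hφ)
  dsimp only
  gcongr with i
  exact (abs_sub _ _).trans (add_le_add (unit_bound _) (unit_bound _))

theorem sum_abs_sub_rpow_le_norm_mul_iSup (hp : 0 < p) (u v : ι → (∀ j, X j))
    (φ : ContinuousMultilinearMap ℝ X ℝ) :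
    (∑ i, |φ (u i) - φ (v i)| ^ p) ^ (1 / p) ≤
      ‖φ‖ * ⨆ ψ : {ψ : ContinuousMultilinearMap ℝ X ℝ // ‖ψ‖ ≤ 1},
        (∑ i, |ψ.1 (u i) - ψ.1 (v i)| ^ p) ^ (1 / p) := by
  set ψ := NormedSpace.normalize φ
  have hψ : ‖ψ‖ ≤ 1 := by
    by_cases h : φ = 0
    · simp [ψ, h]
    · exact (NormedSpace.norm_normalize h).le
  have hφ (x : ∀ j, X j) : φ x = ‖φ‖ * ψ x := by
    conv_lhs => rw [← NormedSpace.norm_smul_normalize φ]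
    rfl
  simp_rw [hφ, ← mul_sub]
  rw [Real.sum_abs_mul_rpow_rpow_one_div hp.ne', abs_norm]
  gcongr
  exact le_ciSup (bddAbove_range_sum_abs_sub_rpow hp.le u v) ⟨ψ, hψ⟩

end ContinuousMultilinearMap

theorem absolutelyPSumming_comp_lipschitzPSumming_general {n : ℕ} {X : Fin n → Type*}
    [∀ i, NormedAddCommGroup (X i)] [∀ i, NormedSpace ℝ (X i)]
    {Y Z : Type*} [NormedAddCommGroup Y] [NormedSpace ℝ Y]
    [NormedAddCommGroup Z] [NormedSpace ℝ Z]
    (p : ℝ) (hp : 1 ≤ p) (C : ℝ) (hC : 0 ≤ C)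
    (T : ContinuousMultilinearMap ℝ X Y) (R : Y →L[ℝ] Z)
    (hR : AbsolutelyPSumming p C R) :
    LipschitzPSumming p (C * ‖T‖) (R.compContinuousMultilinearMap T) := by
  intro k u v
  have hp0 : 0 < p := zero_lt_one.trans_le hp
  have hS : 0 ≤ ⨆ φ : {φ : ContinuousMultilinearMap ℝ X ℝ // ‖φ‖ ≤ 1},
      (∑ i, |φ.1 (u i) - φ.1 (v i)| ^ p) ^ (1 / p) :=
    Real.iSup_nonneg fun _ => by positivity
  have weak_bound (f : {f : Y →L[ℝ] ℝ // ‖f‖ ≤ 1}) :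
      (∑ i, |f.1 (T (u i) - T (v i))| ^ p) ^ (1 / p) ≤ ‖T‖ * ⨆ φ :
        {φ : ContinuousMultilinearMap ℝ X ℝ // ‖φ‖ ≤ 1},
        (∑ i, |φ.1 (u i) - φ.1 (v i)| ^ p) ^ (1 / p) := by
    have hfT : ‖f.1.compContinuousMultilinearMap T‖ ≤ ‖T‖ :=
      (f.1.norm_compContinuousMultilinearMap_le T).trans
        (mul_le_of_le_one_left (norm_nonneg T) f.2)
    simpa only [ContinuousLinearMap.compContinuousMultilinearMap_coe, Function.comp_apply,
      map_sub] using
      (ContinuousMultilinearMap.sum_abs_sub_rpow_le_norm_mul_iSup hp0 u v _).trans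
        (mul_le_mul_of_nonneg_right hfT hS)
  calc (∑ i, ‖R.compContinuousMultilinearMap T (u i) -
        R.compContinuousMultilinearMap T (v i)‖ ^ p) ^ (1 / p)
      = (∑ i, ‖R (T (u i) - T (v i))‖ ^ p) ^ (1 / p) := by simp only [map_sub,
        ContinuousLinearMap.compContinuousMultilinearMap_coe, Function.comp_apply]
    _ ≤ C * ⨆ f : {f : Y →L[ℝ] ℝ // ‖f‖ ≤ 1},
        (∑ i, |f.1 (T (u i) - T (v i))| ^ p) ^ (1 / p) := hR k _
    _ ≤ C * ‖T‖ * _ := by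
      rw [mul_assoc]
      exact mul_le_mul_of_nonneg_left (Real.iSup_le weak_bound (by positivity)) hC

/-- The composition of a continuous multilinear operator `T` with an absolutely
`p`-summing linear operator `R` is Lipschitz `p`-summing with constant `C·‖T‖`. -/
theorem absolutelyPSumming_comp_lipschitzPSumming {n : ℕ} {X : Fin n → Type*}
    [∀ i, NormedAddCommGroup (X i)] [∀ i, NormedSpace ℝ (X i)] [∀ i, CompleteSpace (X i)]
    {Y Z : Type*} [NormedAddCommGroup Y] [NormedSpace ℝ Y] [CompleteSpace Y]
    [NormedAddCommGroup Z] [NormedSpace ℝ Z] [CompleteSpace Z]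
    (p : ℝ) (hp : 1 ≤ p) (C : ℝ) (hC : 0 ≤ C)
    (T : ContinuousMultilinearMap ℝ X Y) (R : Y →L[ℝ] Z)
    (hR : AbsolutelyPSumming p C R) :
    LipschitzPSumming p (C * ‖T‖) (R.compContinuousMultilinearMap T) :=
  absolutelyPSumming_comp_lipschitzPSumming_general p hp C hC T R hR
end

section
/- Let n ≥ 1 and let X₁, …, Xₙ, Y be real Banach spaces with each Xᵢ nonzero. If every continuous n-linear operator from X₁ × ⋯ × Xₙ to Y is Lipschitz 1-summing, then every bounded linear operator S : X₁ → Y is absolutely 1-summing, i.e., for each such S there exists C ≥ 0 such that for every finite family x₁, …, x_k ∈ X₁ one has Σᵢ ‖S(xᵢ)‖ ≤ C · sup{ Σᵢ |x*(xᵢ)| : x* ∈ X₁* with ‖x*‖ ≤ 1 }. -/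
/-! Given `S : X₁ → Y`, choose unit vectors `aᵢ` and functionals `fᵢ` with `fᵢ aᵢ = 1`. The
`n`-linear map `T m = (∏_{i ≠ 1} fᵢ mᵢ) • S m₁` agrees with `S` on the slice
`z ↦ (z, a₂, …, aₙ)`. Feed the Lipschitz summing inequality of `T` the pairs `(xⱼ, a₂, …, aₙ)`,
`(0, a₂, …, aₙ)`: on that slice every multilinear form of norm `≤ 1` restricts to a functional of
norm `≤ 1`, so the multilinear supremum is dominated by the linear one. -/

open scoped BigOperators

/-- `T` is Lipschitz `1`-summing with constant `c`. -/
def Lipschitz1Summing {n : ℕ} {X : Fin n → Type*} [∀ i, NormedAddCommGroup (X i)]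
    [∀ i, NormedSpace ℝ (X i)] {Y : Type*} [NormedAddCommGroup Y] [NormedSpace ℝ Y]
    (c : ℝ) (T : ContinuousMultilinearMap ℝ X Y) : Prop :=
  ∀ (k : ℕ) (u v : Fin k → ((i : Fin n) → X i)),
    (∑ i, ‖T (u i) - T (v i)‖) ≤
      c * ⨆ φ : {φ : ContinuousMultilinearMap ℝ X ℝ // ‖φ‖ ≤ 1},
        ∑ i, |φ.1 (u i) - φ.1 (v i)|

open Finset

def Absolutely1Summing {E F : Type*} [NormedAddCommGroup E] [NormedSpace ℝ E]
    [NormedAddCommGroup F] [NormedSpace ℝ F] (C : ℝ) (S : E →L[ℝ] F) : Prop :=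
  ∀ (k : ℕ) (x : Fin k → E),
    ∑ i, ‖S (x i)‖ ≤ C * ⨆ f : {f : StrongDual ℝ E // ‖f‖ ≤ 1}, ∑ i, |f.1 (x i)|

theorem sum_abs_apply_le_iSup_of_norm_le_one {E : Type*} [NormedAddCommGroup E]
    [NormedSpace ℝ E] {k : ℕ} (x : Fin k → E) {g : StrongDual ℝ E} (hg : ‖g‖ ≤ 1) :
    ∑ i, |g (x i)| ≤ ⨆ f : {f : StrongDual ℝ E // ‖f‖ ≤ 1}, ∑ i, |f.1 (x i)| := by
  refine le_ciSup (f := fun f : {f : StrongDual ℝ E // ‖f‖ ≤ 1} ↦ ∑ i, |f.1 (x i)|)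
    ⟨∑ i, ‖x i‖, ?_⟩ ⟨g, hg⟩
  rintro _ ⟨f, rfl⟩
  refine sum_le_sum fun i _ ↦ ?_
  simpa using f.1.le_of_opNorm_le f.2 (x i)

namespace ContinuousMultilinearMap

variable {𝕜 ι G : Type*} [NontriviallyNormedField 𝕜] [DecidableEq ι]
  {E : ι → Type*} [∀ i, NormedAddCommGroup (E i)] [∀ i, NormedSpace 𝕜 (E i)]
  [NormedAddCommGroup G] [NormedSpace 𝕜 G]

theorem apply_update_sub_apply_update_zero (φ : ContinuousMultilinearMap 𝕜 E G)
    (a : ∀ i, E i) (i₀ : ι) (z : E i₀) :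
    φ (Function.update a i₀ z) - φ (Function.update a i₀ 0) = φ.toContinuousLinearMap a i₀ z := by
  rw [← φ.toContinuousLinearMap_apply, ← φ.toContinuousLinearMap_apply,
    (φ.toContinuousLinearMap a i₀).map_zero, sub_zero]

variable [Fintype ι]

theorem norm_toContinuousLinearMap_le (φ : ContinuousMultilinearMap 𝕜 E G) (a : ∀ i, E i)
    (i₀ : ι) : ‖φ.toContinuousLinearMap a i₀‖ ≤ ‖φ‖ * ∏ i ∈ univ.erase i₀, ‖a i‖ := by
  refine ContinuousLinearMap.opNorm_le_bound _
    (mul_nonneg (norm_nonneg _) (prod_nonneg fun _ _ ↦ norm_nonneg _)) fun z ↦ ?_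
  calc ‖φ (Function.update a i₀ z)‖ ≤ ‖φ‖ * ∏ i, ‖Function.update a i₀ z i‖ := φ.le_opNorm _
    _ = ‖φ‖ * (∏ i ∈ univ.erase i₀, ‖a i‖) * ‖z‖ := by
      simp only [Function.apply_update (fun i (x : E i) ↦ ‖x‖) a,
        prod_update_of_mem (mem_univ i₀), sdiff_singleton_eq_erase]
      ring

end ContinuousMultilinearMap

namespace ContinuousLinearMap

variable {𝕜 ι G : Type*} [NontriviallyNormedField 𝕜] [Fintype ι] [DecidableEq ι]
  {E : ι → Type*} [∀ i, NormedAddCommGroup (E i)] [∀ i, NormedSpace 𝕜 (E i)]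
  [NormedAddCommGroup G] [NormedSpace 𝕜 G]

def smulProdFunctionalsₗ {i₀ : ι} (S : E i₀ →L[𝕜] G) (f : ∀ i, StrongDual 𝕜 (E i)) :
    MultilinearMap 𝕜 E G where
  toFun m := (∏ i ∈ univ.erase i₀, f i (m i)) • S (m i₀)
  map_update_add' m j x y := by
    rcases eq_or_ne j i₀ with rfl | hj
    · simp [Function.apply_update (fun i ↦ ⇑(f i)) m, prod_update_of_notMem]
    · simp [Function.apply_update (fun i ↦ ⇑(f i)) m, prod_update_of_mem, hj,
        Function.update_of_ne hj.symm, add_mul, add_smul]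
  map_update_smul' m j c x := by
    rcases eq_or_ne j i₀ with rfl | hj
    · simp [Function.apply_update (fun i ↦ ⇑(f i)) m, prod_update_of_notMem, smul_comm c]
    · simp [Function.apply_update (fun i ↦ ⇑(f i)) m, prod_update_of_mem, hj,
        Function.update_of_ne hj.symm, mul_assoc, mul_smul]

theorem norm_smulProdFunctionalsₗ_apply_le {i₀ : ι} (S : E i₀ →L[𝕜] G)
    (f : ∀ i, StrongDual 𝕜 (E i)) (m : ∀ i, E i) :
    ‖S.smulProdFunctionalsₗ f m‖ ≤ (‖S‖ * ∏ i ∈ univ.erase i₀, ‖f i‖) * ∏ i, ‖m i‖ :=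
  calc ‖(∏ i ∈ univ.erase i₀, f i (m i)) • S (m i₀)‖
      = (∏ i ∈ univ.erase i₀, ‖f i (m i)‖) * ‖S (m i₀)‖ := by rw [norm_smul, norm_prod]
    _ ≤ (∏ i ∈ univ.erase i₀, ‖f i‖ * ‖m i‖) * (‖S‖ * ‖m i₀‖) := by
      gcongr with i
      · exact (f i).le_opNorm _
      · exact S.le_opNorm _
    _ = (‖S‖ * ∏ i ∈ univ.erase i₀, ‖f i‖) * ∏ i, ‖m i‖ := by
      rw [prod_mul_distrib, ← mul_prod_erase univ (fun i ↦ ‖m i‖) (mem_univ i₀)]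
      ring

noncomputable def smulProdFunctionals {i₀ : ι} (S : E i₀ →L[𝕜] G)
    (f : ∀ i, StrongDual 𝕜 (E i)) : ContinuousMultilinearMap 𝕜 E G :=
  (S.smulProdFunctionalsₗ f).mkContinuous _ (S.norm_smulProdFunctionalsₗ_apply_le f)

theorem smulProdFunctionals_apply {i₀ : ι} (S : E i₀ →L[𝕜] G) (f : ∀ i, StrongDual 𝕜 (E i))
    (m : ∀ i, E i) : S.smulProdFunctionals f m = (∏ i ∈ univ.erase i₀, f i (m i)) • S (m i₀) :=
  rfl

theorem toContinuousLinearMap_smulProdFunctionals {i₀ : ι} (S : E i₀ →L[𝕜] G)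
    {f : ∀ i, StrongDual 𝕜 (E i)} {a : ∀ i, E i} (hfa : ∀ i ≠ i₀, f i (a i) = 1) :
    (S.smulProdFunctionals f).toContinuousLinearMap a i₀ = S := by
  ext z
  have hprod : ∏ i ∈ univ.erase i₀, f i (Function.update a i₀ z i) = 1 :=
    prod_eq_one fun i hi ↦ by
      rw [Function.update_of_ne (ne_of_mem_erase hi), hfa i (ne_of_mem_erase hi)]
  rw [ContinuousMultilinearMap.toContinuousLinearMap_apply, smulProdFunctionals_apply, hprod,
    one_smul, Function.update_self]

end ContinuousLinearMap

theorem ContinuousLinearMap.exists_toContinuousLinearMap_eq {ι : Type*} [Fintype ι]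
    [DecidableEq ι] {E : ι → Type*} [∀ i, NormedAddCommGroup (E i)] [∀ i, NormedSpace ℝ (E i)]
    [∀ i, Nontrivial (E i)] {G : Type*} [NormedAddCommGroup G] [NormedSpace ℝ G] {i₀ : ι}
    (S : E i₀ →L[ℝ] G) :
    ∃ (T : ContinuousMultilinearMap ℝ E G) (a : ∀ i, E i),
      (∀ i, ‖a i‖ = 1) ∧ T.toContinuousLinearMap a i₀ = S := by
  choose a ha using fun i ↦ exists_norm_eq (E i) zero_le_one
  choose f hf using fun i ↦ exists_dual_vector' ℝ (a i)
  refine ⟨S.smulProdFunctionals f, a, ha, S.toContinuousLinearMap_smulProdFunctionals fun i _ ↦ ?_⟩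
  rw [(hf i).2, ha i, RCLike.ofReal_one]

theorem Lipschitz1Summing.absolutely1Summing_toContinuousLinearMap {n : ℕ} {X : Fin n → Type*}
    [∀ i, NormedAddCommGroup (X i)] [∀ i, NormedSpace ℝ (X i)] {Y : Type*} [NormedAddCommGroup Y]
    [NormedSpace ℝ Y] {c : ℝ} {T : ContinuousMultilinearMap ℝ X Y} (hT : Lipschitz1Summing c T)
    (hc : 0 ≤ c) {a : ∀ i, X i} {i₀ : Fin n} (ha : ∀ i ≠ i₀, ‖a i‖ ≤ 1) :
    Absolutely1Summing c (T.toContinuousLinearMap a i₀) := by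
  intro k x
  have hprod : ∏ i ∈ univ.erase i₀, ‖a i‖ ≤ 1 :=
    prod_le_one (fun _ _ ↦ norm_nonneg _) fun i hi ↦ ha i (ne_of_mem_erase hi)
  have hsup : ⨆ φ : {φ : ContinuousMultilinearMap ℝ X ℝ // ‖φ‖ ≤ 1},
      ∑ i, |φ.1 (Function.update a i₀ (x i)) - φ.1 (Function.update a i₀ 0)| ≤
      ⨆ f : {f : StrongDual ℝ (X i₀) // ‖f‖ ≤ 1}, ∑ i, |f.1 (x i)| := by
    have : Nonempty {φ : ContinuousMultilinearMap ℝ X ℝ // ‖φ‖ ≤ 1} := ⟨⟨0, by simp⟩⟩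
    refine ciSup_le fun φ ↦ ?_
    simp only [ContinuousMultilinearMap.apply_update_sub_apply_update_zero]
    exact sum_abs_apply_le_iSup_of_norm_le_one x <| (φ.1.norm_toContinuousLinearMap_le a i₀).trans
      (mul_le_one₀ φ.2 (prod_nonneg fun _ _ ↦ norm_nonneg _) hprod)
  calc ∑ i, ‖T.toContinuousLinearMap a i₀ (x i)‖
      = ∑ i, ‖T (Function.update a i₀ (x i)) - T (Function.update a i₀ 0)‖ := by
        simp only [ContinuousMultilinearMap.apply_update_sub_apply_update_zero]
    _ ≤ c * ⨆ φ : {φ : ContinuousMultilinearMap ℝ X ℝ // ‖φ‖ ≤ 1},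
          ∑ i, |φ.1 (Function.update a i₀ (x i)) - φ.1 (Function.update a i₀ 0)| :=
        hT k _ _
    _ ≤ c * ⨆ f : {f : StrongDual ℝ (X i₀) // ‖f‖ ≤ 1}, ∑ i, |f.1 (x i)| :=
        mul_le_mul_of_nonneg_left hsup hc

theorem linear_absolutely1Summing_of_all_lipschitz1Summing_general {n : ℕ} (hn : 0 < n)
    {X : Fin n → Type*}
    [∀ i, NormedAddCommGroup (X i)] [∀ i, NormedSpace ℝ (X i)]
    [∀ i, Nontrivial (X i)]
    {Y : Type*} [NormedAddCommGroup Y] [NormedSpace ℝ Y]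
    (hall : ∀ T : ContinuousMultilinearMap ℝ X Y, ∃ c : ℝ, 0 ≤ c ∧ Lipschitz1Summing c T)
    (S : X ⟨0, hn⟩ →L[ℝ] Y) :
    ∃ C : ℝ, 0 ≤ C ∧ ∀ (k : ℕ) (x : Fin k → X ⟨0, hn⟩),
      (∑ i, ‖S (x i)‖) ≤
        C * ⨆ f : {f : X ⟨0, hn⟩ →L[ℝ] ℝ // ‖f‖ ≤ 1}, ∑ i, |f.1 (x i)| := by
  obtain ⟨T, a, ha, rfl⟩ := S.exists_toContinuousLinearMap_eq
  obtain ⟨c, hc, hT⟩ := hall T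
  exact ⟨c, hc, hT.absolutely1Summing_toContinuousLinearMap hc fun i _ ↦ (ha i).le⟩

/-- If every continuous `n`-linear operator from `X₁ × ⋯ × Xₙ` (each `Xᵢ` nonzero) to
`Y` is Lipschitz `1`-summing, then every bounded linear `S : X₁ → Y` is absolutely
`1`-summing. -/
theorem linear_absolutely1Summing_of_all_lipschitz1Summing {n : ℕ} (hn : 0 < n)
    {X : Fin n → Type*}
    [∀ i, NormedAddCommGroup (X i)] [∀ i, NormedSpace ℝ (X i)] [∀ i, CompleteSpace (X i)]
    [∀ i, Nontrivial (X i)]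
    {Y : Type*} [NormedAddCommGroup Y] [NormedSpace ℝ Y] [CompleteSpace Y]
    (hall : ∀ T : ContinuousMultilinearMap ℝ X Y, ∃ c : ℝ, 0 ≤ c ∧ Lipschitz1Summing c T)
    (S : X ⟨0, hn⟩ →L[ℝ] Y) :
    ∃ C : ℝ, 0 ≤ C ∧ ∀ (k : ℕ) (x : Fin k → X ⟨0, hn⟩),
      (∑ i, ‖S (x i)‖) ≤
        C * ⨆ f : {f : X ⟨0, hn⟩ →L[ℝ] ℝ // ‖f‖ ≤ 1}, ∑ i, |f.1 (x i)| :=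
  linear_absolutely1Summing_of_all_lipschitz1Summing_general hn hall S
end

section
/- Let X₁, …, Xₙ, Y be real Banach spaces and let T : X₁ × ⋯ × Xₙ → Y be a continuous n-linear operator that is compact, i.e., T maps B₁ × ⋯ × Bₙ to a relatively compact subset of Y whenever each Bᵢ is a bounded subset of Xᵢ. Then T is Dunford–Pettis: for every sequence (u^k)_k in X₁ × ⋯ × Xₙ such that the scalar sequence (φ(u^k))_k converges for every continuous n-linear form φ on X₁ × ⋯ × Xₙ, the sequence (T(u^k))_k converges in the norm of Y. -/
open scoped BigOperators Topology
open Filter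

/-- A continuous multilinear operator is compact if it maps products of bounded sets to
relatively compact sets. -/
def IsCompactMultilinear {n : ℕ} {X : Fin n → Type*} [∀ i, NormedAddCommGroup (X i)]
    [∀ i, NormedSpace ℝ (X i)] {Y : Type*} [NormedAddCommGroup Y] [NormedSpace ℝ Y]
    (T : ContinuousMultilinearMap ℝ X Y) : Prop :=
  ∀ B : (i : Fin n) → Set (X i), (∀ i, Bornology.IsBounded (B i)) →
    IsCompact (closure (⇑T '' {x : (i : Fin n) → X i | ∀ i, x i ∈ B i}))

/-- A continuous multilinear operator is Dunford–Pettis if it sends every sequence that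
is weakly Cauchy in the Segre cone (i.e. `(φ(uᵏ))ₖ` converges for every continuous
multilinear form `φ`) to a norm-convergent sequence. -/
def IsDunfordPettisMultilinear {n : ℕ} {X : Fin n → Type*} [∀ i, NormedAddCommGroup (X i)]
    [∀ i, NormedSpace ℝ (X i)] {Y : Type*} [NormedAddCommGroup Y] [NormedSpace ℝ Y]
    (T : ContinuousMultilinearMap ℝ X Y) : Prop :=
  ∀ u : ℕ → ((i : Fin n) → X i),
    (∀ φ : ContinuousMultilinearMap ℝ X ℝ, ∃ L : ℝ, Tendsto (fun k => φ (u k)) atTop (𝓝 L)) →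
    ∃ y : Y, Tendsto (fun k => T (u k)) atTop (𝓝 y)

/-!
Testing a weakly Cauchy sequence `(uᵏ)` against the forms `x ↦ ∏ fᵢ(xᵢ)` with norming functionals
`fᵢ` and applying Banach–Steinhaus shows that `∏ᵢ ‖uᵏᵢ‖` is bounded. Rescaling the coordinates
does not change `T uᵏ`, so every `uᵏ` may be replaced by a point of a fixed product of balls, and
compactness of `T` puts all `T uᵏ` in one compact set. Composing `T` with functionals `g` on `Y`
shows that `g (T uᵏ)` converges, so all cluster points of `(T uᵏ)` agree on the dual and
hence coincide; a sequence in a compact set with a unique cluster point converges.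
-/

section SeparatingDual

variable {R V ι : Type*} [Ring R] [TopologicalSpace R] [T2Space R] [AddCommGroup V]
  [TopologicalSpace V] [Module R V] [SeparatingDual R V]

theorem exists_tendsto_of_isCompact_of_forall_dual_tendsto {K : Set V} (hK : IsCompact K)
    {l : Filter ι} [l.NeBot] {y : ι → V} (hy : ∀ᶠ i in l, y i ∈ K)
    (hweak : ∀ g : StrongDual R V, ∃ L, Tendsto (fun i => g (y i)) l (𝓝 L)) :
    ∃ a, Tendsto y l (𝓝 a) := by
  obtain ⟨a, -, ha⟩ := hK.exists_mapClusterPt_of_frequently hy.frequently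
  refine ⟨a, hK.tendsto_nhds_of_unique_mapClusterPt hy fun b _ hb => ?_⟩
  refine (SeparatingDual.eq_iff_forall_dual_eq (R := R)).2 fun g => ?_
  obtain ⟨L, hL⟩ := hweak g
  have cluster_eq : ∀ c, MapClusterPt c l y → g c = L := fun c hc =>
    eq_of_nhds_neBot ((hc.continuousAt_comp g.continuous.continuousAt).neBot.mono
      (inf_le_inf_left _ hL))
  rw [cluster_eq b hb, cluster_eq a ha]

end SeparatingDual

namespace MultilinearMap

variable {ι : Type*} [Fintype ι] {X : ι → Type*} [∀ i, NormedAddCommGroup (X i)]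
  [∀ i, NormedSpace ℝ (X i)] {Y : Type*} [AddCommGroup Y] [Module ℝ Y]

theorem exists_norm_le_prod_norm_rpow_apply_eq (f : MultilinearMap ℝ X Y) (x : ∀ i, X i) :
    ∃ y : ∀ i, X i,
      (∀ i, ‖y i‖ ≤ (∏ j, ‖x j‖) ^ (Fintype.card ι : ℝ)⁻¹) ∧ f y = f x := by
  set r := (∏ j, ‖x j‖) ^ (Fintype.card ι : ℝ)⁻¹
  have hr : 0 ≤ r := by positivity
  by_cases hx : ∀ j, x j ≠ 0
  · have hP : 0 < ∏ j, ‖x j‖ := Finset.prod_pos fun j _ => norm_pos_iff.2 (hx j)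
    refine ⟨fun i => (r / ‖x i‖) • x i, fun i => ?_, ?_⟩
    · rw [norm_smul, Real.norm_of_nonneg (by positivity),
        div_mul_cancel₀ _ (norm_ne_zero_iff.2 (hx i))]
    · have hprod : ∏ i, r / ‖x i‖ = 1 := by
        rw [Finset.prod_div_distrib, Finset.prod_const, Finset.card_univ,
          div_eq_one_iff_eq hP.ne']
        rcases isEmpty_or_nonempty ι with hι | hι
        · simp
        · exact Real.rpow_inv_natCast_pow hP.le Fintype.card_ne_zero
      rw [f.map_smul_univ, hprod, one_smul]
  · push Not at hx
    obtain ⟨j, hj⟩ := hx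
    refine ⟨0, fun i => by simpa using hr, ?_⟩
    rw [f.map_coord_zero j rfl, f.map_coord_zero j hj]

end MultilinearMap

namespace ContinuousMultilinearMap

variable {𝕜 ι : Type*} [RCLike 𝕜] [Fintype ι] {X : ι → Type*}
  [∀ i, NormedAddCommGroup (X i)] [∀ i, NormedSpace 𝕜 (X i)]

theorem exists_norm_le_one_apply_eq_prod_norm (x : ∀ i, X i) :
    ∃ φ : ContinuousMultilinearMap 𝕜 X 𝕜, ‖φ‖ ≤ 1 ∧ φ x = ∏ i, (‖x i‖ : 𝕜) := by
  choose f hf_norm hf_apply using fun i => exists_dual_vector'' 𝕜 (x i)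
  let P := ContinuousMultilinearMap.mkPiAlgebra 𝕜 ι 𝕜
  refine ⟨P.compContinuousLinearMap f, ?_, by simp [P, hf_apply]⟩
  calc ‖P.compContinuousLinearMap f‖ ≤ ‖P‖ * ∏ i, ‖f i‖ := norm_compContinuousLinearMap_le P f
    _ ≤ 1 := by
      rw [norm_mkPiAlgebra, one_mul]
      exact Finset.prod_le_one (fun i _ => norm_nonneg _) fun i _ => hf_norm i

theorem prod_norm_le_norm_apply (x : ∀ i, X i) : ∏ i, ‖x i‖ ≤ ‖apply 𝕜 X 𝕜 x‖ := by
  obtain ⟨φ, hφ_norm, hφ_apply⟩ := exists_norm_le_one_apply_eq_prod_norm (𝕜 := 𝕜) x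
  calc ∏ i, ‖x i‖ = ‖apply 𝕜 X 𝕜 x φ‖ := by simp [hφ_apply]
    _ ≤ ‖apply 𝕜 X 𝕜 x‖ * ‖φ‖ := (apply 𝕜 X 𝕜 x).le_opNorm φ
    _ ≤ ‖apply 𝕜 X 𝕜 x‖ := mul_le_of_le_one_right (norm_nonneg (apply 𝕜 X 𝕜 x)) hφ_norm

theorem exists_prod_norm_le_of_forall_tendsto {u : ℕ → ∀ i, X i}
    (hu : ∀ φ : ContinuousMultilinearMap 𝕜 X 𝕜, ∃ L, Tendsto (fun k => φ (u k)) atTop (𝓝 L)) :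
    ∃ C, ∀ k, ∏ i, ‖u k i‖ ≤ C := by
  obtain ⟨C, hC⟩ := banach_steinhaus (g := fun k => apply 𝕜 X 𝕜 (u k)) fun φ => by
    obtain ⟨L, hL⟩ := hu φ
    obtain ⟨M, hM⟩ := hL.norm.bddAbove_range
    exact ⟨M, fun k => hM ⟨k, rfl⟩⟩
  exact ⟨C, fun k => (prod_norm_le_norm_apply (u k)).trans (hC k)⟩

end ContinuousMultilinearMap

theorem IsCompactMultilinear.isCompact_closure_image_prod_norm_le {n : ℕ} {X : Fin n → Type*}
    [∀ i, NormedAddCommGroup (X i)] [∀ i, NormedSpace ℝ (X i)] {Y : Type*}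
    [NormedAddCommGroup Y] [NormedSpace ℝ Y] {T : ContinuousMultilinearMap ℝ X Y}
    (hT : IsCompactMultilinear T) (C : ℝ) :
    IsCompact (closure (T '' {x | ∏ i, ‖x i‖ ≤ C})) := by
  let r := C ^ (Fintype.card (Fin n) : ℝ)⁻¹
  refine (hT (fun i => Metric.closedBall 0 r) fun i => Metric.isBounded_closedBall)
    |>.of_isClosed_subset isClosed_closure (closure_mono ?_)
  rintro _ ⟨x, hx, rfl⟩
  obtain ⟨y, hy, hTy⟩ := T.toMultilinearMap.exists_norm_le_prod_norm_rpow_apply_eq x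
  refine ⟨y, fun i => mem_closedBall_zero_iff.2 ((hy i).trans ?_), hTy⟩
  exact Real.rpow_le_rpow (by positivity) hx (by positivity)

theorem isDunfordPettis_of_isCompact_general {n : ℕ} {X : Fin n → Type*}
    [∀ i, NormedAddCommGroup (X i)] [∀ i, NormedSpace ℝ (X i)]
    {Y : Type*} [NormedAddCommGroup Y] [NormedSpace ℝ Y]
    (T : ContinuousMultilinearMap ℝ X Y) (hT : IsCompactMultilinear T) :
    IsDunfordPettisMultilinear T := by
  intro u hu
  obtain ⟨C, hC⟩ := ContinuousMultilinearMap.exists_prod_norm_le_of_forall_tendsto hu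
  exact exists_tendsto_of_isCompact_of_forall_dual_tendsto (R := ℝ)
    (hT.isCompact_closure_image_prod_norm_le C)
    (Eventually.of_forall fun k => subset_closure ⟨u k, hC k, rfl⟩)
    fun g => hu (g.compContinuousMultilinearMap T)

/-- Every compact continuous multilinear operator is Dunford–Pettis. -/
theorem isDunfordPettis_of_isCompact {n : ℕ} {X : Fin n → Type*}
    [∀ i, NormedAddCommGroup (X i)] [∀ i, NormedSpace ℝ (X i)] [∀ i, CompleteSpace (X i)]
    {Y : Type*} [NormedAddCommGroup Y] [NormedSpace ℝ Y] [CompleteSpace Y]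
    (T : ContinuousMultilinearMap ℝ X Y) (hT : IsCompactMultilinear T) :
    IsDunfordPettisMultilinear T :=
  isDunfordPettis_of_isCompact_general T hT
end

section
/- Let 1 ≤ p < ∞, let X₁, …, Xₙ, Y be real Banach spaces, and let T : X₁ × ⋯ × Xₙ → Y be a continuous n-linear operator that is Lipschitz p-summing. Then T is Dunford–Pettis: for every sequence (u^k)_k in X₁ × ⋯ × Xₙ such that the scalar sequence (φ(u^k))_k converges for every continuous n-linear form φ on X₁ × ⋯ × Xₙ, the sequence (T(u^k))_k converges in the norm of Y. -/
/-!
If `(T uᵏ)` is not Cauchy, there are indices `aₘ, bₘ ≥ m` with `‖T u_{aₘ} - T u_{bₘ}‖ ≥ ε`,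
while `φ(u_{aₘ}) - φ(u_{bₘ}) → 0` for every form `φ`. Scaling one coordinate of the `m`-th pair
by `λₘ^{1/p}` turns the summing inequality into a weighted one, so for every convex mean `λ`
some `φ` in the unit ball has `∑ λₘ |φ(u_{aₘ}) - φ(u_{bₘ})|^p ≥ ε^p / c^p`, and by a Markov
estimate the indices where this term is large carry mass at least some fixed `δ > 0`.
Pták's combinatorial lemma then yields an infinite set `A` of indices each finite subset of
which is witnessed by a single form; a pointwise ultrafilter limit of these witnesses is one
form `ψ` with `|ψ(u_{aₘ}) - ψ(u_{bₘ})|` bounded below on `A`, contradicting weak nullness.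
Pták's lemma is proved by induction on the rank of the well-founded relation "extend a member
of the family by a larger element", building the convex means block by block.
-/

open scoped BigOperators Topology
open Filter

open Function

namespace Ptak

/-- Pták's smallness condition `inf_λ sup_{K ∈ 𝒢} λ(K) = 0`, with the means `λ` supported
beyond an arbitrary `N`. -/
def MeanNegligible (𝒢 : Set (Finset ℕ)) : Prop :=
  ∀ ε > 0, ∀ N : ℕ, ∃ (s : Finset ℕ) (w : ℕ → ℝ), (∀ m ∈ s, N < m) ∧ (∀ m ∈ s, 0 ≤ w m) ∧
    ∑ m ∈ s, w m = 1 ∧ ∀ K ∈ 𝒢, K ⊆ s → ∑ m ∈ K, w m < ε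

theorem MeanNegligible.mono {𝒢 𝒢' : Set (Finset ℕ)} (h : MeanNegligible 𝒢') (h𝒢 : 𝒢 ⊆ 𝒢') :
    MeanNegligible 𝒢 := fun ε hε N =>
  (h ε hε N).imp fun _ => .imp fun _ ⟨hN, hw, hsum, hK⟩ =>
    ⟨hN, hw, hsum, fun K hK𝒢 => hK K (h𝒢 hK𝒢)⟩

theorem meanNegligible_empty : MeanNegligible ∅ := fun _ _ N =>
  ⟨{N + 1}, fun _ => 1, by simp, by simp, by simp, by simp⟩

def derivedFamily (𝒢 : Set (Finset ℕ)) (U : Finset ℕ) : Set (Finset ℕ) :=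
  {K | ∃ k ∈ U, (∀ m ∈ K, k < m) ∧ insert k K ∈ 𝒢}

variable {𝒢 ℱ : Set (Finset ℕ)}

theorem exists_block (h𝒢 : IsLowerSet 𝒢) (hder : ∀ U, MeanNegligible (derivedFamily 𝒢 U))
    {ε : ℝ} (hε : 0 < ε) (N j : ℕ) :
    ∃ (s : Finset ℕ) (w : ℕ → ℝ), (∀ m ∈ s, N < m) ∧ (∀ m ∈ s, 0 ≤ w m) ∧
      ∑ m ∈ s, w m = j ∧ ∀ K ∈ 𝒢, K ⊆ s → ∑ m ∈ K, w m ≤ 1 + j * ε := by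
  classical
  induction j with
  | zero =>
    refine ⟨∅, 0, by simp, by simp, by simp, fun K _ hK => ?_⟩
    simp [Finset.subset_empty.1 hK]
  | succ j ih =>
    obtain ⟨U, w, hUN, hw, hwsum, hwK⟩ := ih
    obtain ⟨s', w', hs'N, hw', hw'sum, hw'K⟩ := hder U ε hε (max N (U.sup id))
    have hUs' : ∀ k ∈ U, ∀ m ∈ s', k < m := fun k hk m hm =>
      (Finset.le_sup (f := id) hk).trans_lt ((le_max_right _ _).trans_lt (hs'N m hm))
    have hdisj : Disjoint U s' :=
      Finset.disjoint_left.2 fun m hmU hms' => lt_irrefl m (hUs' m hmU m hms')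
    refine ⟨U ∪ s', U.piecewise w w', fun m hm => ?_, fun m hm => ?_, ?_, fun K hK hKs => ?_⟩
    · rcases Finset.mem_union.1 hm with hm | hm
      exacts [hUN m hm, (le_max_left _ _).trans_lt (hs'N m hm)]
    · by_cases hmU : m ∈ U
      · rw [Finset.piecewise_eq_of_mem _ _ _ hmU]; exact hw m hmU
      · rw [Finset.piecewise_eq_of_notMem _ _ _ hmU]
        exact hw' m ((Finset.mem_union.1 hm).resolve_left hmU)
    · rw [Finset.sum_piecewise, Finset.union_inter_cancel_left,
        Finset.union_sdiff_cancel_left hdisj, hwsum, hw'sum]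
      push_cast; ring
    · rw [Finset.sum_piecewise]
      have hKU : ∑ m ∈ K ∩ U, w m ≤ 1 + j * ε :=
        hwK _ (h𝒢 Finset.inter_subset_left hK) Finset.inter_subset_right
      have hKs' : K \ U ⊆ s' := fun m hm =>
        (Finset.mem_union.1 (hKs (Finset.mem_sdiff.1 hm).1)).resolve_left (Finset.mem_sdiff.1 hm).2
      rcases (K ∩ U).eq_empty_or_nonempty with hempty | ⟨k, hk⟩
      · have : ∑ m ∈ K \ U, w' m ≤ 1 :=
          hw'sum ▸ Finset.sum_le_sum_of_subset_of_nonneg hKs' fun m hm _ => hw' m hm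
        have : 0 ≤ (j : ℝ) * ε := by positivity
        rw [hempty, Finset.sum_empty]
        push_cast
        linarith
      · -- every element of `K \ U` lies beyond `k ∈ K ∩ U`, so `K \ U` is a derived set
        obtain ⟨hkK, hkU⟩ := Finset.mem_inter.1 hk
        have hder : K \ U ∈ derivedFamily 𝒢 U :=
          ⟨k, hkU, fun m hm => hUs' k hkU m (hKs' hm),
            h𝒢 (Finset.insert_subset hkK Finset.sdiff_subset) hK⟩
        have := hw'K _ hder hKs'
        push_cast
        linarith

theorem meanNegligible_of_derivedFamily (h𝒢 : IsLowerSet 𝒢)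
    (hder : ∀ U, MeanNegligible (derivedFamily 𝒢 U)) : MeanNegligible 𝒢 := by
  intro ε hε N
  obtain ⟨r, hr⟩ := exists_nat_gt (2 / ε)
  have hr0 : (0 : ℝ) < r := (by positivity : (0 : ℝ) < 2 / ε).trans hr
  have hrε : 2 < r * ε := (div_lt_iff₀ hε).1 hr
  obtain ⟨s, w, hsN, hw, hwsum, hwK⟩ := exists_block h𝒢 hder (half_pos hε) N r
  refine ⟨s, fun m => w m / r, hsN, fun m hm => div_nonneg (hw m hm) hr0.le, ?_,
    fun K hK hKs => ?_⟩
  · rw [← Finset.sum_div, hwsum, div_self hr0.ne']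
  · rw [← Finset.sum_div, div_lt_iff₀ hr0]
    linarith [hwK K hK hKs]

def tailFamily (ℱ : Set (Finset ℕ)) (S : Finset ℕ) : Set (Finset ℕ) :=
  {K | (∀ x ∈ S, ∀ k ∈ K, x < k) ∧ S ∪ K ∈ ℱ}

def ChainStep (ℱ : Set (Finset ℕ)) (S' S : Finset ℕ) : Prop :=
  S' ∈ ℱ ∧ ∃ k, (∀ x ∈ S, x < k) ∧ S' = insert k S

theorem isLowerSet_tailFamily (hℱ : IsLowerSet ℱ) (S : Finset ℕ) :
    IsLowerSet (tailFamily ℱ S) := fun _ _ hK'K ⟨habove, hmem⟩ =>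
  ⟨fun x hx k hk => habove x hx k (hK'K hk), hℱ (Finset.union_subset_union le_rfl hK'K) hmem⟩

theorem meanNegligible_biUnion_tailFamily (hℱ : IsLowerSet ℱ) (hwf : WellFounded (ChainStep ℱ))
    (𝒜 : Finset (Finset ℕ)) : MeanNegligible (⋃ S ∈ 𝒜, tailFamily ℱ S) := by
  classical
  have : IsWellFounded _ (ChainStep ℱ) := ⟨hwf⟩
  let rank := IsWellFounded.rank (ChainStep ℱ)
  suffices ∀ μ, ∀ 𝒜 : Finset (Finset ℕ), (∀ S ∈ 𝒜, rank S < μ) →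
      MeanNegligible (⋃ S ∈ 𝒜, tailFamily ℱ S) from
    this _ 𝒜 fun S hS => (Finset.le_sup hS).trans_lt (Order.lt_succ (𝒜.sup rank))
  intro μ
  induction μ using WellFoundedLT.induction with
  | _ μ IH =>
  intro 𝒜 h𝒜
  rcases 𝒜.eq_empty_or_nonempty with rfl | ⟨S₀, hS₀⟩
  · simpa using meanNegligible_empty
  have hν : 𝒜.sup rank < μ := (Finset.sup_lt_iff (bot_le.trans_lt (h𝒜 S₀ hS₀))).2 h𝒜
  refine meanNegligible_of_derivedFamily
    (isLowerSet_iUnion₂ fun S _ => isLowerSet_tailFamily hℱ S) fun U => ?_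
  -- a derived set of the tail at `S` through `k ∈ U` is a tail at the chain step `insert k S`
  let 𝒜' := ((𝒜 ×ˢ U).image fun q => insert q.2 q.1).filter fun S' => ∃ S ∈ 𝒜, ChainStep ℱ S' S
  refine (IH _ hν 𝒜' fun S' hS' => ?_).mono ?_
  · obtain ⟨S, hS, hstep⟩ := (Finset.mem_filter.1 hS').2
    exact (IsWellFounded.rank_lt_of_rel hstep).trans_le (Finset.le_sup hS)
  · rintro K ⟨k, hkU, hkK, hK⟩
    obtain ⟨S, hS, hSk, hSK⟩ := Set.mem_iUnion₂.1 hK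
    have hstep : ChainStep ℱ (insert k S) S :=
      ⟨hℱ (Finset.insert_subset (by simp) (Finset.subset_union_left)) hSK, k,
        fun x hx => hSk x hx k (Finset.mem_insert_self k K), rfl⟩
    refine Set.mem_iUnion₂.2 ⟨insert k S, Finset.mem_filter.2
      ⟨Finset.mem_image.2 ⟨(S, k), Finset.mem_product.2 ⟨hS, hkU⟩, rfl⟩, S, hS, hstep⟩, ?_, ?_⟩
    · intro x hx m hm
      rcases Finset.mem_insert.1 hx with rfl | hx
      exacts [hkK m hm, hSk x hx m (Finset.mem_insert_of_mem hm)]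
    · rwa [Finset.insert_union, ← Finset.union_insert]

theorem exists_infinite_of_not_wellFounded (hℱ : IsLowerSet ℱ) (h : ¬WellFounded (ChainStep ℱ)) :
    ∃ A : Set ℕ, A.Infinite ∧ ∀ K : Finset ℕ, ↑K ⊆ A → K ∈ ℱ := by
  obtain ⟨S, hS⟩ : ∃ S, ¬Acc (ChainStep ℱ) S := by
    by_contra! hacc
    exact h ⟨hacc⟩
  obtain ⟨f, -, hf⟩ := not_acc_iff_exists_descending_chain.1 hS
  have hmono : Monotone f := monotone_nat_of_le_succ fun n => by
    obtain ⟨-, k, -, he⟩ := hf n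
    exact he ▸ Finset.subset_insert k (f n)
  have hcard : ∀ n, n ≤ (f n).card := by
    intro n
    induction n with
    | zero => exact Nat.zero_le _
    | succ n ih =>
      obtain ⟨-, k, hk, he⟩ := hf n
      rw [he, Finset.card_insert_of_notMem fun h => lt_irrefl k (hk k h)]
      omega
  refine ⟨⋃ n, ↑(f n), fun hfin => ?_, fun K hK => ?_⟩
  · have hsub : f (hfin.toFinset.card + 1) ⊆ hfin.toFinset := fun x hx =>
      hfin.mem_toFinset.2 (Set.mem_iUnion.2 ⟨_, hx⟩)
    have := (hcard _).trans (Finset.card_le_card hsub)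
    omega
  · have hmono' : Monotone fun n => (f n : Set ℕ) := fun _ _ h => Finset.coe_subset.2 (hmono h)
    obtain ⟨n, hn⟩ := hmono'.directed_le.exists_mem_subset_of_finset_subset_biUnion hK
    exact hℱ ((Finset.coe_subset.1 hn).trans (hmono n.le_succ)) (hf n).1

theorem exists_infinite_forall_finset_mem (hℱ : IsLowerSet ℱ) {δ : ℝ} (hδ : 0 < δ)
    (hmean : ∀ (s : Finset ℕ) (w : ℕ → ℝ), (∀ m ∈ s, 0 ≤ w m) → ∑ m ∈ s, w m = 1 →
      ∃ K ∈ ℱ, K ⊆ s ∧ δ ≤ ∑ m ∈ K, w m) :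
    ∃ A : Set ℕ, A.Infinite ∧ ∀ K : Finset ℕ, ↑K ⊆ A → K ∈ ℱ := by
  by_cases hwf : WellFounded (ChainStep ℱ)
  · obtain ⟨s, w, -, hw, hwsum, hsmall⟩ := meanNegligible_biUnion_tailFamily hℱ hwf {∅} δ hδ 0
    obtain ⟨K, hK, hKs, hKδ⟩ := hmean s w hw hwsum
    exact absurd hKδ (hsmall K (by simpa [tailFamily] using hK) hKs).not_ge
  · exact exists_infinite_of_not_wellFounded hℱ hwf

end Ptak

section Analytic

variable {n : ℕ} {X : Fin n → Type*} [∀ i, NormedAddCommGroup (X i)] [∀ i, NormedSpace ℝ (X i)]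

theorem ContinuousMultilinearMap.norm_map_update_smul_self_sub {G : Type*}
    [NormedAddCommGroup G] [NormedSpace ℝ G] (f : ContinuousMultilinearMap ℝ X G)
    (u v : ∀ i, X i) (i : Fin n) (a : ℝ) :
    ‖f (update u i (a • u i)) - f (update v i (a • v i))‖ = |a| * ‖f u - f v‖ := by
  rw [f.map_update_smul, f.map_update_smul, update_eq_self, update_eq_self, ← smul_sub,
    norm_smul, Real.norm_eq_abs]

theorem ContinuousMultilinearMap.sum_norm_map_update_rpow_smul_sub {G : Type*}
    [NormedAddCommGroup G] [NormedSpace ℝ G] (f : ContinuousMultilinearMap ℝ X G) (i₀ : Fin n)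
    {p : ℝ} (hp : p ≠ 0) {α : Type*} (s : Finset α) (x y : α → ∀ i, X i) (w : α → ℝ)
    (hw : ∀ m ∈ s, 0 ≤ w m) :
    ∑ m ∈ s, ‖f (update (x m) i₀ (w m ^ (1 / p) • x m i₀)) -
        f (update (y m) i₀ (w m ^ (1 / p) • y m i₀))‖ ^ p =
      ∑ m ∈ s, w m * ‖f (x m) - f (y m)‖ ^ p := by
  refine Finset.sum_congr rfl fun m hm => ?_
  rw [f.norm_map_update_smul_self_sub, Real.mul_rpow (abs_nonneg _) (norm_nonneg _),
    abs_of_nonneg (Real.rpow_nonneg (hw m hm) _), ← Real.rpow_mul (hw m hm),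
    one_div_mul_cancel hp, Real.rpow_one]

theorem exists_pos_bound_abs_apply_sub {ι : Type*} (x y : ι → ∀ i, X i)
    (hxy : ∀ φ : ContinuousMultilinearMap ℝ X ℝ, ∃ C, ∀ m, |φ (x m) - φ (y m)| ≤ C) :
    ∃ M > 0, ∀ m (φ : ContinuousMultilinearMap ℝ X ℝ), ‖φ‖ ≤ 1 → |φ (x m) - φ (y m)| ≤ M := by
  let g m :=
    ContinuousMultilinearMap.apply ℝ X ℝ (x m) - ContinuousMultilinearMap.apply ℝ X ℝ (y m)
  obtain ⟨C, hC⟩ := banach_steinhaus (g := g) hxy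
  refine ⟨max C 1, by positivity, fun m φ hφ => ?_⟩
  calc |φ (x m) - φ (y m)| = ‖g m φ‖ := rfl
    _ ≤ ‖g m‖ * ‖φ‖ := (g m).le_opNorm φ
    _ ≤ max C 1 * 1 := by gcongr; exacts [(hC m).trans (le_max_left _ _)]
    _ = max C 1 := mul_one _

theorem exists_tendsto_ultrafilter_apply {ι G : Type*} [NormedAddCommGroup G] [NormedSpace ℝ G]
    [ProperSpace G] (𝒰 : Ultrafilter ι) (φ : ι → ContinuousMultilinearMap ℝ X G) {C : ℝ}
    (hφ : ∀ i, ‖φ i‖ ≤ C) :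
    ∃ ψ : ContinuousMultilinearMap ℝ X G, ∀ v, Tendsto (fun i => φ i v) 𝒰 (𝓝 (ψ v)) := by
  have hbound : ∀ v i, ‖φ i v‖ ≤ C * ∏ j, ‖v j‖ := fun v i => (φ i).le_of_opNorm_le (hφ i) v
  have hlim : ∀ v, ∃ y, Tendsto (fun i => φ i v) 𝒰 (𝓝 y) := fun v => by
    obtain ⟨y, -, hy⟩ := (isCompact_closedBall (0 : G) (C * ∏ j, ‖v j‖)).ultrafilter_le_nhds
      (𝒰.map fun i => φ i v) (le_principal_iff.2 <| Ultrafilter.mem_map.2 <|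
        Filter.univ_mem' fun i => by simpa using hbound v i)
    exact ⟨y, hy⟩
  choose F hF using hlim
  refine ⟨MultilinearMap.mkContinuous
    { toFun := F
      map_update_add' := fun m i a b => tendsto_nhds_unique (hF _) <| by
        simpa only [ContinuousMultilinearMap.map_update_add] using (hF _).add (hF _)
      map_update_smul' := fun m i a b => tendsto_nhds_unique (hF _) <| by
        simpa only [ContinuousMultilinearMap.map_update_smul] using (hF _).const_smul a }
    C fun v => le_of_tendsto (hF v).norm (Eventually.of_forall (hbound v)), hF⟩

theorem exists_forall_le_abs_rpow_of_forall_finset {α : Type*} (A : Set α) (x y : α → ∀ i, X i)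
    {p t : ℝ} (hp : 0 ≤ p)
    (hA : ∀ K : Finset α, ↑K ⊆ A → ∃ φ : ContinuousMultilinearMap ℝ X ℝ, ‖φ‖ ≤ 1 ∧
      ∀ m ∈ K, t ≤ |φ (x m) - φ (y m)| ^ p) :
    ∃ ψ : ContinuousMultilinearMap ℝ X ℝ, ∀ m ∈ A, t ≤ |ψ (x m) - ψ (y m)| ^ p := by
  classical
  have hK : ∀ K : Finset α, ∃ φ : ContinuousMultilinearMap ℝ X ℝ, ‖φ‖ ≤ 1 ∧
      ∀ m ∈ K, m ∈ A → t ≤ |φ (x m) - φ (y m)| ^ p := fun K =>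
    (hA (K.filter (· ∈ A)) fun m hm => (Finset.mem_filter.1 hm).2).imp fun _ ⟨hφ, ht⟩ =>
      ⟨hφ, fun m hm hmA => ht m (Finset.mem_filter.2 ⟨hm, hmA⟩)⟩
  choose φ hφ ht using hK
  -- a cluster point of the witnesses along an ultrafilter refining `atTop` works for all of `A`
  obtain ⟨ψ, hψ⟩ := exists_tendsto_ultrafilter_apply (Ultrafilter.of atTop) φ hφ
  refine ⟨ψ, fun m hm => ge_of_tendsto (((hψ _).sub (hψ _)).abs.rpow_const (Or.inr hp)) ?_⟩
  exact ((eventually_ge_atTop {m}).mono fun K hK => ht K m (hK (Finset.mem_singleton_self m)) hm)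
    |>.filter_mono (Ultrafilter.of_le _)

theorem sum_mul_le_mul_sum_filter_add {ι : Type*} (s : Finset ι) (w f : ι → ℝ) {M t : ℝ}
    (hw : ∀ m ∈ s, 0 ≤ w m) (hf : ∀ m ∈ s, f m ≤ M) (ht : 0 ≤ t) :
    ∑ m ∈ s, w m * f m ≤ M * ∑ m ∈ s with t ≤ f m, w m + t * ∑ m ∈ s, w m := by
  have hsub : ∑ m ∈ s with ¬t ≤ f m, w m ≤ ∑ m ∈ s, w m :=
    Finset.sum_le_sum_of_subset_of_nonneg (Finset.filter_subset _ _) fun m hm _ => hw m hm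
  calc ∑ m ∈ s, w m * f m
      = ∑ m ∈ s with t ≤ f m, w m * f m + ∑ m ∈ s with ¬t ≤ f m, w m * f m :=
        (Finset.sum_filter_add_sum_filter_not s _ _).symm
    _ ≤ (∑ m ∈ s with t ≤ f m, w m) * M + (∑ m ∈ s with ¬t ≤ f m, w m) * t := by
        rw [Finset.sum_mul, Finset.sum_mul]
        gcongr with m hm m hm
        · exact hw m (Finset.mem_filter.1 hm).1
        · exact hf m (Finset.mem_filter.1 hm).1
        · exact hw m (Finset.mem_filter.1 hm).1
        · exact (not_le.1 (Finset.mem_filter.1 hm).2).le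
    _ ≤ M * ∑ m ∈ s with t ≤ f m, w m + t * ∑ m ∈ s, w m := by
        rw [mul_comm _ M, mul_comm _ t]; gcongr

/-- A Mazur-type statement, proved through Pták's lemma. -/
theorem exists_weights_sum_mul_abs_rpow_le (x y : ℕ → ∀ i, X i)
    (hxy : ∀ φ : ContinuousMultilinearMap ℝ X ℝ, Tendsto (fun m => φ (x m) - φ (y m)) atTop (𝓝 0))
    {p θ : ℝ} (hp : 0 < p) (hθ : 0 < θ) :
    ∃ (s : Finset ℕ) (w : ℕ → ℝ), (∀ m ∈ s, 0 ≤ w m) ∧ ∑ m ∈ s, w m = 1 ∧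
      ∀ φ : ContinuousMultilinearMap ℝ X ℝ, ‖φ‖ ≤ 1 →
        ∑ m ∈ s, w m * |φ (x m) - φ (y m)| ^ p ≤ θ := by
  obtain ⟨M, hM0, hM⟩ := exists_pos_bound_abs_apply_sub x y fun φ => by
    obtain ⟨C, hC⟩ := (hxy φ).abs.bddAbove_range
    exact ⟨C, fun m => hC ⟨m, rfl⟩⟩
  by_contra! hbig
  let ℱ : Set (Finset ℕ) := {K | ∃ φ : ContinuousMultilinearMap ℝ X ℝ, ‖φ‖ ≤ 1 ∧
    ∀ m ∈ K, θ / 2 ≤ |φ (x m) - φ (y m)| ^ p}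
  have hℱ : IsLowerSet ℱ := fun _ _ hK'K ⟨φ, hφ, hK⟩ => ⟨φ, hφ, fun m hm => hK m (hK'K hm)⟩
  have hmean : ∀ (s : Finset ℕ) (w : ℕ → ℝ), (∀ m ∈ s, 0 ≤ w m) → ∑ m ∈ s, w m = 1 →
      ∃ K ∈ ℱ, K ⊆ s ∧ θ / (2 * M ^ p) ≤ ∑ m ∈ K, w m := by
    intro s w hw hw1
    obtain ⟨φ, hφ, hθφ⟩ := hbig s w hw hw1
    refine ⟨s.filter fun m => θ / 2 ≤ |φ (x m) - φ (y m)| ^ p,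
      ⟨φ, hφ, fun m hm => (Finset.mem_filter.1 hm).2⟩, Finset.filter_subset _ _, ?_⟩
    have hmarkov := sum_mul_le_mul_sum_filter_add s w (fun m => |φ (x m) - φ (y m)| ^ p) hw
      (fun m _ => Real.rpow_le_rpow (abs_nonneg _) (hM m φ hφ) hp.le) (half_pos hθ).le
    rw [hw1] at hmarkov
    rw [div_le_iff₀ (by positivity)]
    linarith
  obtain ⟨A, hA, hAℱ⟩ := Ptak.exists_infinite_forall_finset_mem hℱ (by positivity) hmean
  obtain ⟨ψ, hψ⟩ := exists_forall_le_abs_rpow_of_forall_finset A x y hp.le hAℱ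
  have hψ0 : Tendsto (fun m => |ψ (x m) - ψ (y m)| ^ p) atTop (𝓝 0) := by
    simpa [Real.zero_rpow hp.ne'] using (hxy ψ).abs.rpow_const (Or.inr hp.le)
  obtain ⟨N, hN⟩ := eventually_atTop.1 (hψ0.eventually_lt_const (half_pos hθ))
  obtain ⟨m, hmA, hmN⟩ := hA.exists_gt N
  exact (hψ m hmA).not_gt (hN m hmN.le)

end Analytic

section Summing

variable {n : ℕ} {X : Fin n → Type*} [∀ i, NormedAddCommGroup (X i)] [∀ i, NormedSpace ℝ (X i)]
  {Y : Type*} [NormedAddCommGroup Y] [NormedSpace ℝ Y] {p c : ℝ}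
  {T : ContinuousMultilinearMap ℝ X Y}

theorem LipschitzPSumming.le_finset (hT : LipschitzPSumming p c T) {α : Type*} (s : Finset α)
    (x y : α → ∀ i, X i) :
    (∑ m ∈ s, ‖T (x m) - T (y m)‖ ^ p) ^ (1 / p) ≤
      c * ⨆ φ : {φ : ContinuousMultilinearMap ℝ X ℝ // ‖φ‖ ≤ 1},
        (∑ m ∈ s, |φ.1 (x m) - φ.1 (y m)| ^ p) ^ (1 / p) := by
  have hsum : ∀ F : α → ℝ, ∑ j : Fin s.card, F (s.equivFin.symm j) = ∑ m ∈ s, F m := fun F =>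
    (Fintype.sum_equiv s.equivFin.symm _ _ fun _ => rfl).trans (Finset.sum_coe_sort s F)
  convert hT s.card (fun j => x (s.equivFin.symm j)) (fun j => y (s.equivFin.symm j)) using 4
  · exact (hsum _).symm
  · exact congrArg (· ^ (1 / p)) (hsum _).symm

theorem LipschitzPSumming.sum_mul_rpow_le (hT : LipschitzPSumming p c T) (hp : 0 < p)
    (hc : 0 ≤ c) (i₀ : Fin n) {α : Type*} (s : Finset α) (x y : α → ∀ i, X i) (w : α → ℝ)
    (hw : ∀ m ∈ s, 0 ≤ w m) {θ : ℝ}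
    (hθ : ∀ φ : ContinuousMultilinearMap ℝ X ℝ, ‖φ‖ ≤ 1 →
      ∑ m ∈ s, w m * |φ (x m) - φ (y m)| ^ p ≤ θ) :
    ∑ m ∈ s, w m * ‖T (x m) - T (y m)‖ ^ p ≤ c ^ p * θ := by
  have hθ0 : 0 ≤ θ := by simpa [Real.zero_rpow hp.ne'] using hθ 0 (by simp)
  let scale (v : α → ∀ i, X i) (m : α) : ∀ i, X i := update (v m) i₀ (w m ^ (1 / p) • v m i₀)
  have hsup : ⨆ φ : {φ : ContinuousMultilinearMap ℝ X ℝ // ‖φ‖ ≤ 1},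
      (∑ m ∈ s, |φ.1 (scale x m) - φ.1 (scale y m)| ^ p) ^ (1 / p) ≤ θ ^ (1 / p) := by
    have : Nonempty {φ : ContinuousMultilinearMap ℝ X ℝ // ‖φ‖ ≤ 1} := ⟨⟨0, by simp⟩⟩
    refine ciSup_le fun φ => ?_
    have := φ.1.sum_norm_map_update_rpow_smul_sub i₀ hp.ne' s x y w hw
    simp only [Real.norm_eq_abs] at this
    rw [this]
    exact Real.rpow_le_rpow (Finset.sum_nonneg fun m hm => mul_nonneg (hw m hm) (by positivity))
      (hθ φ.1 φ.2) (by positivity)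
  have hmain := (hT.le_finset s (scale x) (scale y)).trans (mul_le_mul_of_nonneg_left hsup hc)
  rw [T.sum_norm_map_update_rpow_smul_sub i₀ hp.ne' s x y w hw] at hmain
  rwa [← Real.rpow_le_rpow_iff
      (Finset.sum_nonneg fun m hm => mul_nonneg (hw m hm) (by positivity)) (by positivity)
      (one_div_pos.2 hp), Real.mul_rpow (by positivity) hθ0, ← Real.rpow_mul hc,
    mul_one_div_cancel hp.ne', Real.rpow_one]

theorem LipschitzPSumming.cauchySeq_apply (hT : LipschitzPSumming p c T) (hp : 0 < p)
    (hc : 0 ≤ c) (u : ℕ → ∀ i, X i)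
    (hu : ∀ φ : ContinuousMultilinearMap ℝ X ℝ, ∃ L, Tendsto (fun k => φ (u k)) atTop (𝓝 L)) :
    CauchySeq fun k => T (u k) := by
  rcases isEmpty_or_nonempty (Fin n) with hn | ⟨⟨i₀⟩⟩
  · have : (fun k => T (u k)) = fun _ => T (u 0) :=
      funext fun k => by rw [Subsingleton.elim (u k) (u 0)]
    exact this ▸ cauchySeq_const _
  rw [Metric.cauchySeq_iff]
  by_contra! hdiv
  obtain ⟨ε, hε, hdiv⟩ := hdiv
  choose a ha b hb hab using hdiv
  have hxy : ∀ φ : ContinuousMultilinearMap ℝ X ℝ,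
      Tendsto (fun m => φ (u (a m)) - φ (u (b m))) atTop (𝓝 0) := fun φ => by
    obtain ⟨L, hL⟩ := hu φ
    simpa using (hL.comp (tendsto_atTop_mono ha tendsto_id)).sub
      (hL.comp (tendsto_atTop_mono hb tendsto_id))
  obtain ⟨θ, hθ, hcθ⟩ := exists_pos_mul_lt (Real.rpow_pos_of_pos hε p) (c ^ p)
  obtain ⟨s, w, hw, hw1, hsmall⟩ :=
    exists_weights_sum_mul_abs_rpow_le (u ∘ a) (u ∘ b) hxy hp hθ
  have hlarge : ε ^ p ≤ ∑ m ∈ s, w m * ‖T (u (a m)) - T (u (b m))‖ ^ p :=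
    calc ε ^ p = ∑ m ∈ s, w m * ε ^ p := by rw [← Finset.sum_mul, hw1, one_mul]
      _ ≤ _ := Finset.sum_le_sum fun m hm => mul_le_mul_of_nonneg_left
          (Real.rpow_le_rpow hε.le (dist_eq_norm (T _) _ ▸ hab m) hp.le) (hw m hm)
  exact hcθ.not_ge (hlarge.trans (hT.sum_mul_rpow_le hp hc i₀ s (u ∘ a) (u ∘ b) w hw hsmall))

end Summing

theorem isDunfordPettis_of_lipschitzPSumming_general {n : ℕ} {X : Fin n → Type*}
    [∀ i, NormedAddCommGroup (X i)] [∀ i, NormedSpace ℝ (X i)]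
    {Y : Type*} [NormedAddCommGroup Y] [NormedSpace ℝ Y] [CompleteSpace Y]
    (p : ℝ) (hp : 1 ≤ p) (T : ContinuousMultilinearMap ℝ X Y)
    (hT : ∃ c : ℝ, 0 ≤ c ∧ LipschitzPSumming p c T) :
    IsDunfordPettisMultilinear T := by
  obtain ⟨c, hc, hT⟩ := hT
  exact fun u hu => cauchySeq_tendsto_of_complete (hT.cauchySeq_apply (by linarith) hc u hu)

/-- Every Lipschitz `p`-summing continuous multilinear operator is Dunford–Pettis. -/
theorem isDunfordPettis_of_lipschitzPSumming {n : ℕ} {X : Fin n → Type*}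
    [∀ i, NormedAddCommGroup (X i)] [∀ i, NormedSpace ℝ (X i)] [∀ i, CompleteSpace (X i)]
    {Y : Type*} [NormedAddCommGroup Y] [NormedSpace ℝ Y] [CompleteSpace Y]
    (p : ℝ) (hp : 1 ≤ p) (T : ContinuousMultilinearMap ℝ X Y)
    (hT : ∃ c : ℝ, 0 ≤ c ∧ LipschitzPSumming p c T) :
    IsDunfordPettisMultilinear T :=
  isDunfordPettis_of_lipschitzPSumming_general p hp T hT
end

section
/- Let X₁, …, Xₙ, Y be real Banach spaces. Suppose that every sequence (u^k)_k in X₁ × ⋯ × Xₙ with sup_k ‖u₁^k‖ ⋯ ‖uₙ^k‖ < ∞ admits a subsequence (u^{k_l})_l such that the scalar sequence (φ(u^{k_l}))_l converges for every continuous n-linear form φ on X₁ × ⋯ × Xₙ. Then every Dunford–Pettis continuous n-linear operator T : X₁ × ⋯ × Xₙ → Y is compact, i.e., T maps B₁ × ⋯ × Bₙ to a relatively compact subset of Y whenever each Bᵢ is a bounded subset of Xᵢ. -/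
open scoped BigOperators Topology
open Filter

/-!
A sequence in `T (B₁ × ⋯ × Bₙ)` lifts to a sequence in the Segre cone with bounded product of
norms; by hypothesis it has a weakly Cauchy subsequence, which the Dunford–Pettis operator `T`
sends to a norm-convergent sequence. So the image is relatively sequentially compact, and in a
metric space this makes its closure compact.
-/

theorem isCompact_closure_of_forall_exists_subseq_tendsto {E : Type*} [PseudoMetricSpace E]
    {s : Set E}
    (hs : ∀ y : ℕ → E, (∀ k, y k ∈ s) →
      ∃ z, ∃ σ : ℕ → ℕ, StrictMono σ ∧ Tendsto (y ∘ σ) atTop (𝓝 z)) :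
    IsCompact (closure s) := by
  refine IsSeqCompact.isCompact fun x hx => ?_
  have happrox : ∀ k : ℕ, ∃ p ∈ s, dist (x k) p < 1 / (k + 1) := fun k =>
    Metric.mem_closure_iff.1 (hx k) _ (by positivity)
  choose y hys hxy using happrox
  have hdist : Tendsto (fun k => dist (y k) (x k)) atTop (𝓝 0) :=
    squeeze_zero (fun _ => dist_nonneg) (fun k => (dist_comm _ _).trans_le (hxy k).le)
      tendsto_one_div_add_atTop_nhds_zero_nat
  obtain ⟨z, σ, hσ, hyz⟩ := hs y hys
  refine ⟨z, mem_closure_of_tendsto hyz (Eventually.of_forall fun l => hys (σ l)), σ, hσ, ?_⟩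
  exact hyz.congr_dist (hdist.comp hσ.tendsto_atTop)

theorem exists_forall_prod_norm_le_of_isBounded {ι : Type*} [Fintype ι] {X : ι → Type*}
    [∀ i, SeminormedAddCommGroup (X i)] {B : (i : ι) → Set (X i)}
    (hB : ∀ i, Bornology.IsBounded (B i)) :
    ∃ M : ℝ, ∀ x : (i : ι) → X i, (∀ i, x i ∈ B i) → ∏ i, ‖x i‖ ≤ M := by
  choose C hC using fun i => isBounded_iff_forall_norm_le.1 (hB i)
  exact ⟨∏ i, C i, fun x hx =>
    Finset.prod_le_prod (fun i _ => norm_nonneg _) (fun i _ => hC i _ (hx i))⟩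

theorem isCompact_of_isDunfordPettis_general {n : ℕ} {X : Fin n → Type*}
    [∀ i, NormedAddCommGroup (X i)] [∀ i, NormedSpace ℝ (X i)]
    {Y : Type*} [NormedAddCommGroup Y] [NormedSpace ℝ Y]
    (hweak : ∀ u : ℕ → ((i : Fin n) → X i), (∃ M : ℝ, ∀ k, (∏ i, ‖u k i‖) ≤ M) →
      ∃ σ : ℕ → ℕ, StrictMono σ ∧
        ∀ φ : ContinuousMultilinearMap ℝ X ℝ,
          ∃ L : ℝ, Tendsto (fun l => φ (u (σ l))) atTop (𝓝 L))
    (T : ContinuousMultilinearMap ℝ X Y) (hT : IsDunfordPettisMultilinear T) :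
    IsCompactMultilinear T := by
  intro B hB
  obtain ⟨M, hM⟩ := exists_forall_prod_norm_le_of_isBounded hB
  refine isCompact_closure_of_forall_exists_subseq_tendsto fun y hy => ?_
  choose u hu hTu using hy
  obtain ⟨σ, hσ, hφ⟩ := hweak u ⟨M, fun k => hM (u k) (hu k)⟩
  obtain ⟨z, hz⟩ := hT (u ∘ σ) hφ
  refine ⟨z, σ, hσ, ?_⟩
  simpa only [Function.comp_def, hTu] using hz

/-- If every bounded sequence in the Segre cone of `X₁, …, Xₙ` has a weakly Cauchy
subsequence, then every Dunford–Pettis continuous multilinear operator is compact. -/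
theorem isCompact_of_isDunfordPettis {n : ℕ} {X : Fin n → Type*}
    [∀ i, NormedAddCommGroup (X i)] [∀ i, NormedSpace ℝ (X i)] [∀ i, CompleteSpace (X i)]
    {Y : Type*} [NormedAddCommGroup Y] [NormedSpace ℝ Y] [CompleteSpace Y]
    (hweak : ∀ u : ℕ → ((i : Fin n) → X i), (∃ M : ℝ, ∀ k, (∏ i, ‖u k i‖) ≤ M) →
      ∃ σ : ℕ → ℕ, StrictMono σ ∧
        ∀ φ : ContinuousMultilinearMap ℝ X ℝ,
          ∃ L : ℝ, Tendsto (fun l => φ (u (σ l))) atTop (𝓝 L))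
    (T : ContinuousMultilinearMap ℝ X Y) (hT : IsDunfordPettisMultilinear T) :
    IsCompactMultilinear T :=
  isCompact_of_isDunfordPettis_general hweak T hT
end
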